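/- arXiv:2107.02738 — 11 statements merged into one kernel-verified Lean document; each statement's English description precedes it below -/
import Mathlib

section
/- Let P be a function assigning to each ordered pair of distinct k-subsets A,B of [n] a probability P(A,B) in [0,1] with P(A,B)=1-P(B,A), linked to a strict total order ≻ on k-subsets via A ≻ B iff P(A,B)>1/2, satisfying strong stochastic transitivity (A ≻ B ≻ C implies P(A,C) ≥ max(P(A,B),P(B,C))) and consistency. If a,b are players with a ≻ b (i.e., S∪{a} ≻ S∪{b} for all (k-1)-subsets S of [n]\{a,b}), then for any two disjoint (k-1)-subsets S,S' of [n]\{a,b}, P(S∪{a}, S'∪{b}) ≥ P(S∪{b}, S'∪{a}). -/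
/-- Under strict total order, SST, consistency, if player `a` beats
player `b` consistently, then for disjoint (k-1)-subsets S, S' avoiding a,b:
P(S∪{a}, S'∪{b}) ≥ P(S∪{b}, S'∪{a}). -/
theorem stmt0 (n k : ℕ) (hk : 1 ≤ k) (hkn : 2*k ≤ n)
    (succ : Finset (Fin n) → Finset (Fin n) → Prop)
    (P : Finset (Fin n) → Finset (Fin n) → ℝ)
    (hrange : ∀ A B, 0 ≤ P A B ∧ P A B ≤ 1)
    (hsym : ∀ A B : Finset (Fin n), A.card = k → B.card = k → A ≠ B → P A B = 1 - P B A)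
    (hlink : ∀ A B : Finset (Fin n), A.card = k → B.card = k → A ≠ B →
      (succ A B ↔ 1/2 < P A B))
    (htrans : ∀ A B C, succ A B → succ B C → succ A C)
    (hasym : ∀ A B, succ A B → ¬ succ B A)
    (htotal : ∀ A B : Finset (Fin n), A.card = k → B.card = k → A ≠ B →
      (succ A B ∨ succ B A))
    (hSST : ∀ A B C, succ A B → succ B C → max (P A B) (P B C) ≤ P A C)
    (hcons : ∀ x y : Fin n, x ≠ y →
      (∀ S : Finset (Fin n), S.card = k-1 → x ∉ S → y ∉ S → succ (insert x S) (insert y S)) ∨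
      (∀ S : Finset (Fin n), S.card = k-1 → x ∉ S → y ∉ S → succ (insert y S) (insert x S)))
    (a b : Fin n) (hab : a ≠ b)
    (hdom : ∀ S : Finset (Fin n), S.card = k-1 → a ∉ S → b ∉ S →
      succ (insert a S) (insert b S))
    (S S' : Finset (Fin n))
    (hS : S.card = k-1) (hS' : S'.card = k-1)
    (haS : a ∉ S) (hbS : b ∉ S) (haS' : a ∉ S') (hbS' : b ∉ S')
    (hdisj : Disjoint S S') :
    P (insert b S) (insert a S') ≤ P (insert a S) (insert b S') := by

  set A := insert a S with hA
  set B := insert b S with hB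
  set C := insert a S' with hC
  set D := insert b S' with hD
  have hkc : k - 1 + 1 = k := Nat.sub_add_cancel hk
  have hcA : A.card = k := by rw [hA, Finset.card_insert_of_notMem haS, hS, hkc]
  have hcB : B.card = k := by rw [hB, Finset.card_insert_of_notMem hbS, hS, hkc]
  have hcC : C.card = k := by rw [hC, Finset.card_insert_of_notMem haS', hS', hkc]
  have hcD : D.card = k := by rw [hD, Finset.card_insert_of_notMem hbS', hS', hkc]
  have hAB : A ≠ B := by
    intro h
    have : a ∈ B := h ▸ Finset.mem_insert_self a S
    rcases Finset.mem_insert.mp this with h1 | h1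
    · exact hab h1
    · exact haS h1
  have hCD : C ≠ D := by
    intro h
    have : a ∈ D := h ▸ Finset.mem_insert_self a S'
    rcases Finset.mem_insert.mp this with h1 | h1
    · exact hab h1
    · exact haS' h1
  have hAD : A ≠ D := by
    intro h
    have : a ∈ D := h ▸ Finset.mem_insert_self a S
    rcases Finset.mem_insert.mp this with h1 | h1
    · exact hab h1
    · exact haS' h1
  have hBC : B ≠ C := by
    intro h
    have : b ∈ C := h ▸ Finset.mem_insert_self b S
    rcases Finset.mem_insert.mp this with h1 | h1
    · exact hab h1.symm
    · exact hbS' h1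
  have hsAB : succ A B := hdom S hS haS hbS
  have hsCD : succ C D := hdom S' hS' haS' hbS'
  rcases htotal B C hcB hcC hBC with hsBC | hsCB
  · -- A ≻ B ≻ C ≻ D
    have hsAC : succ A C := htrans A B C hsAB hsBC
    have h1 := hSST A B C hsAB hsBC
    have h2 := hSST A C D hsAC hsCD
    have := le_max_right (P A B) (P B C)
    have := le_max_left (P A C) (P C D)
    linarith
  · rcases htotal A D hcA hcD hAD with hsAD | hsDA
    · have h1 : 1/2 < P A D := (hlink A D hcA hcD hAD).mp hsAD
      have h2 : 1/2 < P C B := (hlink C B hcC hcB hBC.symm).mp hsCB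
      have h3 : P B C = 1 - P C B := hsym B C hcB hcC hBC
      linarith
    · -- C ≻ D ≻ A ≻ B
      have hsCA : succ C A := htrans C D A hsCD hsDA
      have h1 := hSST C D A hsCD hsDA
      have h2 := hSST C A B hsCA hsAB
      have h3 : P B C = 1 - P C B := hsym B C hcB hcC hBC
      have h4 : P A D = 1 - P D A := hsym A D hcA hcD hAD
      have := le_max_right (P C D) (P D A)
      have := le_max_left (P C A) (P A B)
      linarith
end

section
/- Under the same assumptions (strict total order on k-subsets, strong stochastic transitivity, consistency), if a,b are players with a ≻ b, then for every (k-1)-subset S of [n]\{a,b} and every k-subset T of [n]\{a,b} disjoint from S, P(S∪{a}, T) ≥ P(S∪{b}, T). -/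
/-- Under strict total order, SST, consistency, if a ≻ b then for any
(k-1)-subset S and disjoint k-subset T (both avoiding a,b):
P(S∪{a}, T) ≥ P(S∪{b}, T). -/
theorem stmt1 (n k : ℕ) (hk : 1 ≤ k) (hkn : 2*k ≤ n)
    (succ : Finset (Fin n) → Finset (Fin n) → Prop)
    (P : Finset (Fin n) → Finset (Fin n) → ℝ)
    (hrange : ∀ A B, 0 ≤ P A B ∧ P A B ≤ 1)
    (hsym : ∀ A B : Finset (Fin n), A.card = k → B.card = k → A ≠ B → P A B = 1 - P B A)
    (hlink : ∀ A B : Finset (Fin n), A.card = k → B.card = k → A ≠ B →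
      (succ A B ↔ 1/2 < P A B))
    (htrans : ∀ A B C, succ A B → succ B C → succ A C)
    (hasym : ∀ A B, succ A B → ¬ succ B A)
    (htotal : ∀ A B : Finset (Fin n), A.card = k → B.card = k → A ≠ B →
      (succ A B ∨ succ B A))
    (hSST : ∀ A B C, succ A B → succ B C → max (P A B) (P B C) ≤ P A C)
    (hcons : ∀ x y : Fin n, x ≠ y →
      (∀ S : Finset (Fin n), S.card = k-1 → x ∉ S → y ∉ S → succ (insert x S) (insert y S)) ∨
      (∀ S : Finset (Fin n), S.card = k-1 → x ∉ S → y ∉ S → succ (insert y S) (insert x S)))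
    (a b : Fin n) (hab : a ≠ b)
    (hdom : ∀ S : Finset (Fin n), S.card = k-1 → a ∉ S → b ∉ S →
      succ (insert a S) (insert b S))
    (S T : Finset (Fin n))
    (hS : S.card = k-1) (hT : T.card = k)
    (haS : a ∉ S) (hbS : b ∉ S) (haT : a ∉ T) (hbT : b ∉ T)
    (hdisj : Disjoint S T) :
    P (insert b S) T ≤ P (insert a S) T := by
  set A := insert a S with hA'
  set B := insert b S with hB'
  have hAcard : A.card = k := by
    rw [hA', Finset.card_insert_of_notMem haS, hS]; omega
  have hBcard : B.card = k := by
    rw [hB', Finset.card_insert_of_notMem hbS, hS]; omega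
  have hAB : A ≠ B := by
    intro h
    have : a ∈ B := h ▸ Finset.mem_insert_self a S
    rcases Finset.mem_insert.1 this with h1 | h2
    · exact hab h1
    · exact haS h2
  have hAT : A ≠ T := fun h => haT (h ▸ Finset.mem_insert_self a S)
  have hBT : B ≠ T := fun h => hbT (h ▸ Finset.mem_insert_self b S)
  have hsAB : succ A B := hdom S hS haS hbS
  rcases htotal A T hAcard hT hAT with hA | hA
  · rcases htotal B T hBcard hT hBT with hB | hB
    · exact le_trans (le_max_right _ _) (hSST A B T hsAB hB)
    · have h1 := (hlink A T hAcard hT hAT).1 hA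
      have h2 := (hlink T B hT hBcard (Ne.symm hBT)).1 hB
      have h3 := hsym T B hT hBcard (Ne.symm hBT)
      linarith
  · rcases htotal B T hBcard hT hBT with hB | hB
    · exact absurd (htrans B T A hB hA) (hasym A B hsAB)
    · have h0 := hSST T A B hA hsAB
      have h1 := hsym T A hT hAcard (Ne.symm hAT)
      have h2 := hsym T B hT hBcard (Ne.symm hBT)
      have h3 := le_trans (le_max_left _ _) h0
      linarith
end

section
/- Let ≻ be a strict total consistent order on k-subsets of [n] (deterministic setting), and let a ≻ b ≻ c be players. If (S,S') is a subsets witness for b ≻ c (i.e., disjoint (k-1)-subsets of [n]\{b,c} with S∪{b} ≻ S'∪{c} and S'∪{b} ≻ S∪{c}), then (π(S), π(S')) is a subsets witness for a ≻ c, where π is the permutation on subsets exchanging players a and b. -/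
def swapSet {n : ℕ} (a b : Fin n) (A : Finset (Fin n)) : Finset (Fin n) :=
  if a ∈ A ∧ b ∉ A then insert b (A.erase a)
  else if b ∈ A ∧ a ∉ A then insert a (A.erase b)
  else A

lemma swap_of_mem {n : ℕ} {a b : Fin n} {A : Finset (Fin n)} (h : a ∈ A) (hb : b ∉ A) :
    swapSet a b A = insert b (A.erase a) := by
  simp [swapSet, h, hb]

lemma swap_of_notMem {n : ℕ} {a b : Fin n} {A : Finset (Fin n)} (ha : a ∉ A) (hb : b ∉ A) :
    swapSet a b A = A := by
  simp [swapSet, ha, hb]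

lemma insert_a_swap_of_mem {n : ℕ} {a b : Fin n} {A : Finset (Fin n)}
    (h : a ∈ A) (hb : b ∉ A) :
    insert a (swapSet a b A) = insert b A := by
  rw [swap_of_mem h hb, Finset.insert_comm, Finset.insert_erase h]

lemma key {n k : ℕ} (succ : Finset (Fin n) → Finset (Fin n) → Prop)
    (htrans : ∀ A B C, succ A B → succ B C → succ A C)
    (a b c : Fin n) (hab : a ≠ b) (hbc : b ≠ c) (hac : a ≠ c)
    (hdomab : ∀ S : Finset (Fin n), S.card = k-1 → a ∉ S → b ∉ S →
      succ (insert a S) (insert b S))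
    (X Y : Finset (Fin n)) (hX : X.card = k-1) (hY : Y.card = k-1)
    (hbX : b ∉ X) (hcX : c ∉ X) (hbY : b ∉ Y) (hcY : c ∉ Y)
    (hw : succ (insert b X) (insert c Y)) :
    succ (insert a (swapSet a b X)) (insert c (swapSet a b Y)) := by
  have h1 : succ (insert a (swapSet a b X)) (insert c Y) := by
    by_cases haX : a ∈ X
    · rw [insert_a_swap_of_mem haX hbX]; exact hw
    · rw [swap_of_notMem haX hbX]
      exact htrans _ _ _ (hdomab X hX haX hbX) hw
  by_cases haY : a ∈ Y
  · rw [swap_of_mem haY hbY]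
    set T := insert c (Y.erase a) with hT
    have hcard : T.card = k - 1 := by
      have h1 : (Y.erase a).card = k - 1 - 1 := by rw [Finset.card_erase_of_mem haY, hY]
      have h2 : 1 ≤ k - 1 := by
        have := Finset.card_pos.mpr ⟨a, haY⟩; omega
      rw [hT, Finset.card_insert_of_notMem (fun hc => hcY (Finset.mem_of_mem_erase hc)), h1]
      omega
    have haT : a ∉ T := by
      simp [hT, hac, Finset.mem_erase]
    have hbT : b ∉ T := by
      rw [hT, Finset.mem_insert]
      push_neg
      exact ⟨hbc, fun h => hbY (Finset.mem_of_mem_erase h)⟩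
    have hd := hdomab T hcard haT hbT
    have e1 : insert a T = insert c Y := by
      rw [hT, Finset.insert_comm, Finset.insert_erase haY]
    have e2 : insert b T = insert c (insert b (Y.erase a)) := by
      rw [hT, Finset.insert_comm]
    rw [e1, e2] at hd
    exact htrans _ _ _ h1 hd
  · rw [swap_of_notMem haY hbY]; exact h1

/-- if a ≻ b ≻ c and (S,S') is a subsets witness for b ≻ c,
then (π(S), π(S')) is a subsets witness for a ≻ c, where π exchanges a and b. -/
theorem stmt4 (n k : ℕ) (hk : 1 ≤ k) (hkn : 2*k ≤ n)
    (succ : Finset (Fin n) → Finset (Fin n) → Prop)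
    (htrans : ∀ A B C, succ A B → succ B C → succ A C)
    (hasym : ∀ A B, succ A B → ¬ succ B A)
    (htotal : ∀ A B : Finset (Fin n), A.card = k → B.card = k → A ≠ B →
      (succ A B ∨ succ B A))
    (hcons : ∀ x y : Fin n, x ≠ y →
      (∀ S : Finset (Fin n), S.card = k-1 → x ∉ S → y ∉ S → succ (insert x S) (insert y S)) ∨
      (∀ S : Finset (Fin n), S.card = k-1 → x ∉ S → y ∉ S → succ (insert y S) (insert x S)))
    (a b c : Fin n) (hab : a ≠ b) (hbc : b ≠ c) (hac : a ≠ c)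
    (hdomab : ∀ S : Finset (Fin n), S.card = k-1 → a ∉ S → b ∉ S →
      succ (insert a S) (insert b S))
    (hdombc : ∀ S : Finset (Fin n), S.card = k-1 → b ∉ S → c ∉ S →
      succ (insert b S) (insert c S))
    (S S' : Finset (Fin n))
    (hS : S.card = k-1) (hS' : S'.card = k-1)
    (hbS : b ∉ S) (hcS : c ∉ S) (hbS' : b ∉ S') (hcS' : c ∉ S')
    (hdisj : Disjoint S S')
    (hw1 : succ (insert b S) (insert c S'))
    (hw2 : succ (insert b S') (insert c S)) :
    (swapSet a b S).card = k-1 ∧ (swapSet a b S').card = k-1 ∧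
    a ∉ swapSet a b S ∧ c ∉ swapSet a b S ∧
    a ∉ swapSet a b S' ∧ c ∉ swapSet a b S' ∧
    Disjoint (swapSet a b S) (swapSet a b S') ∧
    succ (insert a (swapSet a b S)) (insert c (swapSet a b S')) ∧
    succ (insert a (swapSet a b S')) (insert c (swapSet a b S)) := by
  have card_lem : ∀ X : Finset (Fin n), X.card = k - 1 → b ∉ X →
      (swapSet a b X).card = k - 1 := by
    intro X hX hbX
    by_cases haX : a ∈ X
    · rw [swap_of_mem haX hbX,
        Finset.card_insert_of_notMem (fun h => hbX (Finset.mem_of_mem_erase h)),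
        Finset.card_erase_of_mem haX, hX]
      have := Finset.card_pos.mpr ⟨a, haX⟩
      omega
    · rw [swap_of_notMem haX hbX]; exact hX
  have na_lem : ∀ X : Finset (Fin n), b ∉ X → a ∉ swapSet a b X := by
    intro X hbX
    by_cases haX : a ∈ X
    · rw [swap_of_mem haX hbX]
      simp [hab, Finset.mem_erase]
    · rw [swap_of_notMem haX hbX]; exact haX
  have nc_lem : ∀ X : Finset (Fin n), b ∉ X → c ∉ X → c ∉ swapSet a b X := by
    intro X hbX hcX
    by_cases haX : a ∈ X
    · rw [swap_of_mem haX hbX]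
      rw [Finset.mem_insert]
      push_neg
      exact ⟨Ne.symm hbc, fun h => hcX (Finset.mem_of_mem_erase h)⟩
    · rw [swap_of_notMem haX hbX]; exact hcX
  refine ⟨card_lem S hS hbS, card_lem S' hS' hbS', na_lem S hbS, nc_lem S hbS hcS,
    na_lem S' hbS', nc_lem S' hbS' hcS', ?_, ?_, ?_⟩
  · -- disjointness
    by_cases haS : a ∈ S
    · have haS' : a ∉ S' := Finset.disjoint_left.mp hdisj haS
      rw [swap_of_mem haS hbS, swap_of_notMem haS' hbS']
      rw [Finset.disjoint_insert_left]
      exact ⟨hbS', Disjoint.mono_left (Finset.erase_subset _ _) hdisj⟩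
    · by_cases haS' : a ∈ S'
      · rw [swap_of_notMem haS hbS, swap_of_mem haS' hbS']
        rw [Finset.disjoint_insert_right]
        exact ⟨hbS, Disjoint.mono_right (Finset.erase_subset _ _) hdisj⟩
      · rw [swap_of_notMem haS hbS, swap_of_notMem haS' hbS']; exact hdisj
  · exact key succ htrans a b c hab hbc hac hdomab S S' hS hS' hbS hcS hbS' hcS' hw1
  · exact key succ htrans a b c hab hbc hac hdomab S' S hS' hS hbS' hcS' hbS hcS hw2
end

section
/- Let ≻ be a strict total order on k-subsets of [n] satisfying consistency, and let R ⊆ [n] be a set of players containing the top 2k players A*_{2k}. If W ⊆ R is a team (k-subset) such that W ≻ A for every team A ⊆ R\W, then W is a Condorcet winning team, i.e., W ≻ B for every team B ⊆ [n] disjoint from W. -/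
/-!
Induct on the number of players of `B` outside `R`. A player `b ∈ B \ R` has at least `2k`
dominators in the player order induced by consistency, so one of them lies outside `W ∪ B`;
a maximal such dominator `x` lies in `R`, since otherwise it too has `2k` dominators, one of
which would dominate `x` from outside `W ∪ B`. Exchanging `b` for `x` gives a team `B' ≻ B` that is
still disjoint from `W` and has fewer players outside `R`, so `W ≻ B' ≻ B`.
-/

open Finset

section Dominance

variable {α : Type*} [DecidableEq α]

theorem exists_card_eq_sub_one_avoiding [Fintype α] {k : ℕ} (hk : 2 * k ≤ Fintype.card α)
    (u v w : α) : ∃ S : Finset α, #S = k - 1 ∧ u ∉ S ∧ v ∉ S ∧ w ∉ S := by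
  have hP : #{u, v, w} ≤ 3 := card_le_three
  have hc : k - 1 ≤ #({u, v, w}ᶜ : Finset α) := by
    have := card_le_univ ({u, v, w} : Finset α)
    rw [card_compl]
    omega
  obtain ⟨S, hS, hSc⟩ := exists_subset_card_eq hc
  refine ⟨S, hSc, ?_, ?_, ?_⟩ <;> intro h <;> simpa using hS h

theorem card_insert_erase_of_mem_of_notMem {s : Finset α} {x b : α} (hb : b ∈ s) (hx : x ∉ s) :
    #(insert x (s.erase b)) = #s := by
  rw [card_insert_of_notMem fun h => hx (mem_of_mem_erase h), card_erase_add_one hb]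

theorem card_insert_erase_sdiff_lt {B R : Finset α} {x b : α} (hx : x ∈ R) (hb : b ∈ B \ R) :
    #(insert x (B.erase b) \ R) < #(B \ R) := by
  rw [insert_sdiff_of_mem _ hx, erase_sdiff_comm]
  exact card_erase_lt_of_mem hb

/-- The player order induced by consistency: `x` dominates `y` when replacing `y` by `x`
improves every team that contains `y` but not `x`. -/
def Dominates (succ : Finset α → Finset α → Prop) (k : ℕ) (x y : α) : Prop :=
  ∀ S : Finset α, #S = k - 1 → x ∉ S → y ∉ S → succ (insert x S) (insert y S)

variable {succ : Finset α → Finset α → Prop} {k : ℕ}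

theorem Dominates.succ_insert_erase {x b : α} (h : Dominates succ k x b) {B : Finset α}
    (hB : #B = k) (hb : b ∈ B) (hx : x ∉ B) : succ (insert x (B.erase b)) B := by
  have := h (B.erase b) (by rw [card_erase_of_mem hb, hB]) (fun h => hx (mem_of_mem_erase h))
    (notMem_erase b B)
  rwa [insert_erase hb] at this

variable [Fintype α]

theorem Dominates.irrefl [Std.Asymm succ] (hk : 2 * k ≤ Fintype.card α) (x : α) :
    ¬ Dominates succ k x x := fun h => by
  obtain ⟨S, hS, hx, -⟩ := exists_card_eq_sub_one_avoiding hk x x x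
  exact asymm (h S hS hx hx) (h S hS hx hx)

theorem Dominates.trans [IsTrans (Finset α) succ] [Std.Asymm succ]
    (hk : 2 * k ≤ Fintype.card α)
    (hcons : ∀ x y, x ≠ y → Dominates succ k x y ∨ Dominates succ k y x) {u v w : α}
    (huv : Dominates succ k u v) (hvw : Dominates succ k v w) : Dominates succ k u w := by
  obtain ⟨S, hS, hu, hv, hw⟩ := exists_card_eq_sub_one_avoiding hk u v w
  have huw := _root_.trans (huv S hS hu hv) (hvw S hS hv hw)
  obtain rfl | hne := eq_or_ne u w
  · exact (asymm huw huw).elim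
  refine (hcons u w hne).resolve_right fun hwu => ?_
  exact asymm huw (hwu S hS hw hu)

end Dominance

open Classical in
theorem exists_rel_mem_notMem_of_card_dominators_lt {α : Type*} [Fintype α] (r : α → α → Prop)
    [IsTrans α r] [Std.Irrefl r] (R T : Finset α)
    (hR : ∀ z, #{x | r x z} < #T → z ∈ R) {b : α} (hbT : b ∈ T) (hbR : b ∉ R) :
    ∃ x ∈ R, x ∉ T ∧ r x b := by
  have outside : ∀ z, ¬ r b z → z ∉ R → ∃ y, y ∉ T ∧ r y z := by
    intro z hbz hzR
    have hlt : #(T.erase b) < #{x | r x z} :=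
      (card_erase_lt_of_mem hbT).trans_le (not_lt.1 (mt (hR z) hzR))
    obtain ⟨y, hyz, hyT⟩ := exists_mem_notMem_of_card_lt_card hlt
    have hyz : r y z := (mem_filter.1 hyz).2
    exact ⟨y, fun h => hyT (mem_erase.2 ⟨fun hyb => hbz (hyb ▸ hyz), h⟩), hyz⟩
  obtain ⟨x, ⟨hxT, hxb⟩, hmax⟩ := (Finite.wellFounded_of_trans_of_irrefl r).has_min
    {x | x ∉ T ∧ r x b} (outside b (irrefl b) hbR)
  refine ⟨x, by_contra fun hxR => ?_, hxT, hxb⟩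
  obtain ⟨y, hyT, hyx⟩ := outside x (asymm hxb) hxR
  exact hmax y ⟨hyT, _root_.trans hyx hxb⟩ hyx

open Classical in
theorem stmt6_general (n k : ℕ) (hkn : 2*k ≤ n)
    (succ : Finset (Fin n) → Finset (Fin n) → Prop)
    (htrans : ∀ A B C, succ A B → succ B C → succ A C)
    (hasym : ∀ A B, succ A B → ¬ succ B A)
    (hcons : ∀ x y : Fin n, x ≠ y →
      (∀ S : Finset (Fin n), S.card = k-1 → x ∉ S → y ∉ S → succ (insert x S) (insert y S)) ∨
      (∀ S : Finset (Fin n), S.card = k-1 → x ∉ S → y ∉ S → succ (insert y S) (insert x S)))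
    (R : Finset (Fin n))
    (hR : ∀ b : Fin n,
      (Finset.univ.filter (fun x : Fin n => ∀ S : Finset (Fin n), S.card = k-1 →
        x ∉ S → b ∉ S → succ (insert x S) (insert b S))).card < 2*k → b ∈ R)
    (W : Finset (Fin n)) (hW : W.card = k)
    (hbeat : ∀ A : Finset (Fin n), A ⊆ R \ W → A.card = k → succ W A) :
    ∀ B : Finset (Fin n), B.card = k → Disjoint W B → succ W B := by
  have : IsTrans _ succ := ⟨htrans⟩
  have : Std.Asymm succ := ⟨hasym⟩
  have hn : 2 * k ≤ Fintype.card (Fin n) := by rwa [Fintype.card_fin]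
  have : IsTrans _ (Dominates succ k) := ⟨fun _ _ _ => Dominates.trans hn fun x y hxy =>
    (hcons x y hxy).imp id fun h S hS hy hx => h S hS hx hy⟩
  have : Std.Irrefl (Dominates succ k) := ⟨Dominates.irrefl hn⟩
  -- `hR` filters with a different, though propositionally equal, `Decidable` instance
  have hR' : ∀ z, #{x | Dominates succ k x z} < 2 * k → z ∈ R :=
    fun z hz => hR z (by convert hz using 3; rfl)
  intro B hB hWB
  induction hm : #(B \ R) using Nat.strong_induction_on generalizing B with
  | _ m ih =>
  obtain hBR | ⟨b, hb⟩ := (B \ R).eq_empty_or_nonempty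
  · exact hbeat B (subset_sdiff.2 ⟨sdiff_eq_empty_iff_subset.1 hBR, hWB.symm⟩) hB
  have hbB := (mem_sdiff.1 hb).1
  have hWBcard : #(W ∪ B) ≤ 2 * k := (card_union_le W B).trans (by omega)
  obtain ⟨x, hxR, hxWB, hxb⟩ := exists_rel_mem_notMem_of_card_dominators_lt (Dominates succ k)
    R (W ∪ B) (fun z hz => hR' z (hz.trans_le hWBcard)) (mem_union_right W hbB) (mem_sdiff.1 hb).2
  obtain ⟨hxW, hxB⟩ := not_or.1 (mem_union.not.1 hxWB)
  have hB' : #(insert x (B.erase b)) = k := (card_insert_erase_of_mem_of_notMem hbB hxB).trans hB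
  have hWB' : Disjoint W (insert x (B.erase b)) :=
    disjoint_insert_right.2 ⟨hxW, hWB.mono_right (erase_subset b B)⟩
  exact _root_.trans (ih _ (hm ▸ card_insert_erase_sdiff_lt hxR hb) _ hB' hWB' rfl)
    (hxb.succ_insert_erase hB hbB hxB)

open Classical in
/-- if R contains the top 2k players (those dominated by fewer than 2k
players) and W ⊆ R beats every team inside R \ W, then W is a Condorcet winning team. -/
theorem stmt6 (n k : ℕ) (hk : 1 ≤ k) (hkn : 2*k ≤ n)
    (succ : Finset (Fin n) → Finset (Fin n) → Prop)
    (htrans : ∀ A B C, succ A B → succ B C → succ A C)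
    (hasym : ∀ A B, succ A B → ¬ succ B A)
    (htotal : ∀ A B : Finset (Fin n), A.card = k → B.card = k → A ≠ B →
      (succ A B ∨ succ B A))
    (hcons : ∀ x y : Fin n, x ≠ y →
      (∀ S : Finset (Fin n), S.card = k-1 → x ∉ S → y ∉ S → succ (insert x S) (insert y S)) ∨
      (∀ S : Finset (Fin n), S.card = k-1 → x ∉ S → y ∉ S → succ (insert y S) (insert x S)))
    (R : Finset (Fin n))
    (hR : ∀ b : Fin n,
      (Finset.univ.filter (fun x : Fin n => ∀ S : Finset (Fin n), S.card = k-1 →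
        x ∉ S → b ∉ S → succ (insert x S) (insert b S))).card < 2*k → b ∈ R)
    (W : Finset (Fin n)) (hWR : W ⊆ R) (hW : W.card = k)
    (hbeat : ∀ A : Finset (Fin n), A ⊆ R \ W → A.card = k → succ W A) :
    ∀ B : Finset (Fin n), B.card = k → Disjoint W B → succ W B :=
  stmt6_general n k hkn succ htrans hasym hcons R hR W hW hbeat
end

section
/- Let G be an undirected graph on vertex set V such that every independent set of G has size at most 2k. If |V| ≥ 6k-1, then G contains a matching of size 2k. -/
/-!
Take a matching `M` of maximum size. No edge joins two vertices it leaves uncovered, so these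
at least `|V| - 2|M|` vertices form an independent set and `|V| ≤ 2|M| + 2k`. With
`|V| ≥ 6k - 1` this gives `2|M| ≥ 4k - 1`, hence `|M| ≥ 2k` by parity.
-/

namespace SimpleGraph

variable {V : Type*} (G : SimpleGraph V)

def IsPairMatching (M : Finset (V × V)) : Prop :=
  (∀ e ∈ M, G.Adj e.1 e.2) ∧
    ∀ e ∈ M, ∀ f ∈ M, e ≠ f → e.1 ≠ f.1 ∧ e.1 ≠ f.2 ∧ e.2 ≠ f.1 ∧ e.2 ≠ f.2

variable {G}

theorem isPairMatching_empty : G.IsPairMatching ∅ := by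
  simp [IsPairMatching]

theorem IsPairMatching.mono {M N : Finset (V × V)} (hM : G.IsPairMatching M) (hNM : N ⊆ M) :
    G.IsPairMatching N :=
  ⟨fun e he => hM.1 e (hNM he), fun e he f hf hef => hM.2 e (hNM he) f (hNM hf) hef⟩

section Support

variable [DecidableEq V]

def pairSupport (M : Finset (V × V)) : Finset V :=
  M.image Prod.fst ∪ M.image Prod.snd

theorem card_pairSupport_le (M : Finset (V × V)) : (pairSupport M).card ≤ 2 * M.card :=
  calc (pairSupport M).card ≤ (M.image Prod.fst).card + (M.image Prod.snd).card :=
        Finset.card_union_le _ _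
    _ ≤ M.card + M.card := add_le_add Finset.card_image_le Finset.card_image_le
    _ = 2 * M.card := (two_mul _).symm

theorem ne_of_notMem_pairSupport {M : Finset (V × V)} {w : V} (hw : w ∉ pairSupport M)
    {f : V × V} (hf : f ∈ M) : w ≠ f.1 ∧ w ≠ f.2 := by
  refine ⟨fun h => hw ?_, fun h => hw ?_⟩
  · exact Finset.mem_union_left _ (Finset.mem_image.mpr ⟨f, hf, h.symm⟩)
  · exact Finset.mem_union_right _ (Finset.mem_image.mpr ⟨f, hf, h.symm⟩)

theorem IsPairMatching.insert {M : Finset (V × V)} (hM : G.IsPairMatching M) {u v : V}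
    (huv : G.Adj u v) (hu : u ∉ pairSupport M) (hv : v ∉ pairSupport M) :
    G.IsPairMatching (insert (u, v) M) := by
  refine ⟨fun e he => ?_, fun e he f hf hef => ?_⟩
  · rcases Finset.mem_insert.mp he with rfl | he
    exacts [huv, hM.1 e he]
  rcases Finset.mem_insert.mp he with rfl | he <;> rcases Finset.mem_insert.mp hf with rfl | hf
  · exact absurd rfl hef
  · obtain ⟨hu1, hu2⟩ := ne_of_notMem_pairSupport hu hf
    obtain ⟨hv1, hv2⟩ := ne_of_notMem_pairSupport hv hf
    exact ⟨hu1, hu2, hv1, hv2⟩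
  · obtain ⟨hu1, hu2⟩ := ne_of_notMem_pairSupport hu he
    obtain ⟨hv1, hv2⟩ := ne_of_notMem_pairSupport hv he
    exact ⟨hu1.symm, hv1.symm, hu2.symm, hv2.symm⟩
  · exact hM.2 e he f hf hef

theorem mk_notMem_of_notMem_pairSupport {M : Finset (V × V)} {u v : V}
    (hu : u ∉ pairSupport M) : (u, v) ∉ M :=
  fun h => hu (Finset.mem_union_left _ (Finset.mem_image.mpr ⟨(u, v), h, rfl⟩))

variable [Fintype V]

theorem exists_isPairMatching_forall_not_adj :
    ∃ M, G.IsPairMatching M ∧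
      ∀ u ∈ Finset.univ \ pairSupport M, ∀ v ∈ Finset.univ \ pairSupport M, ¬ G.Adj u v := by
  classical
  obtain ⟨M, hMmem, hMmax⟩ := Finset.exists_max_image
    (Finset.univ.filter G.IsPairMatching) Finset.card
    ⟨∅, Finset.mem_filter.mpr ⟨Finset.mem_univ _, isPairMatching_empty⟩⟩
  have hM : G.IsPairMatching M := (Finset.mem_filter.mp hMmem).2
  refine ⟨M, hM, fun u hu v hv huv => ?_⟩
  have hu' := (Finset.mem_sdiff.mp hu).2
  have hv' := (Finset.mem_sdiff.mp hv).2
  have hle := hMmax _ (Finset.mem_filter.mpr ⟨Finset.mem_univ _, hM.insert huv hu' hv'⟩)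
  rw [Finset.card_insert_of_notMem (mk_notMem_of_notMem_pairSupport hu')] at hle
  omega

theorem exists_isPairMatching_card_le {a : ℕ}
    (hindep : ∀ I : Finset V, (∀ u ∈ I, ∀ v ∈ I, ¬ G.Adj u v) → I.card ≤ a) :
    ∃ M, G.IsPairMatching M ∧ Fintype.card V ≤ 2 * M.card + a := by
  obtain ⟨M, hM, hfree⟩ := G.exists_isPairMatching_forall_not_adj
  refine ⟨M, hM, ?_⟩
  have hfree_card := hindep _ hfree
  rw [Finset.card_sdiff_of_subset (Finset.subset_univ _), Finset.card_univ] at hfree_card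
  have := card_pairSupport_le M
  omega

end Support

end SimpleGraph

theorem stmt8_general (V : Type*) [Fintype V] [DecidableEq V] (k : ℕ)
    (G : SimpleGraph V)
    (hindep : ∀ I : Finset V, (∀ u ∈ I, ∀ v ∈ I, ¬ G.Adj u v) → I.card ≤ 2*k)
    (hV : 6*k - 1 ≤ Fintype.card V) :
    ∃ M : Finset (V × V), M.card = 2*k ∧
      (∀ e ∈ M, G.Adj e.1 e.2) ∧
      (∀ e ∈ M, ∀ f ∈ M, e ≠ f →
        e.1 ≠ f.1 ∧ e.1 ≠ f.2 ∧ e.2 ≠ f.1 ∧ e.2 ≠ f.2) := by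
  obtain ⟨M, hM, hcard⟩ := SimpleGraph.exists_isPairMatching_card_le hindep
  obtain ⟨N, hNM, hN⟩ := Finset.exists_subset_card_eq (show 2 * k ≤ M.card by omega)
  exact ⟨N, hN, hM.mono hNM⟩

/-- if every independent set of an undirected graph G has size ≤ 2k and
G has at least 6k-1 vertices, then G contains a matching of size 2k. -/
theorem stmt8 (V : Type*) [Fintype V] [DecidableEq V] (k : ℕ) (hk : 1 ≤ k)
    (G : SimpleGraph V)
    (hindep : ∀ I : Finset V, (∀ u ∈ I, ∀ v ∈ I, ¬ G.Adj u v) → I.card ≤ 2*k)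
    (hV : 6*k - 1 ≤ Fintype.card V) :
    ∃ M : Finset (V × V), M.card = 2*k ∧
      (∀ e ∈ M, G.Adj e.1 e.2) ∧
      (∀ e ∈ M, ∀ f ∈ M, e ≠ f →
        e.1 ≠ f.1 ∧ e.1 ≠ f.2 ∧ e.2 ≠ f.1 ∧ e.2 ≠ f.2) :=
  stmt8_general V k G hindep hV
end

section
/- Let v : [n] → ℝ and extend v additively to subsets. Let U, W, X, Y, Z be pairwise disjoint subsets of [n] with |U| = |W|, |X| = |Y|, and |Z| ≤ |U|. Suppose there exist ε₁ < ε₂ (both positive reals) and elements u₁,...,u_{|Z|+1} ∈ U, w₁,...,w_{|Z|+1} ∈ W (the uᵢ pairwise distinct, the wᵢ pairwise distinct) such that: (i) |v(X) - v(Y)| < ε₁; (ii) |v(a) - v(b)| < ε₂ for all a ∈ Y ∪ W and b ∈ Z; (iii) v(u₁) - v(w₁) ≥ ε₁ and v(uᵢ) - v(wᵢ) ≥ ε₂ for all i ∈ {2,...,|Z|+1}; (iv) v(u) > v(w) for all u ∈ U, w ∈ W. Then for every subset B of W ∪ Y ∪ Z with |B| = |W| + |Y|, we have v(U ∪ X)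 > v(B). -/
open Finset in
lemma sum_le_sum_add_card_mul {α : Type*} [DecidableEq α] (v : α → ℝ) (c : ℝ)
    (A B : Finset α) (h : A.card = B.card)
    (hle : ∀ a ∈ A, ∀ b ∈ B, v a ≤ v b + c) :
    ∑ a ∈ A, v a ≤ (∑ b ∈ B, v b) + A.card * c := by
  let e := Finset.equivOfCardEq h
  calc ∑ a ∈ A, v a = ∑ x ∈ A.attach, v ↑x := (Finset.sum_attach _ _).symm
    _ ≤ ∑ x ∈ A.attach, (v ↑(e x) + c) :=
        Finset.sum_le_sum (fun x _ => hle x x.2 (e x) (e x).2)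
    _ = (∑ x ∈ A.attach, v ↑(e x)) + A.card * c := by
        rw [Finset.sum_add_distrib, Finset.sum_const, Finset.card_attach, nsmul_eq_mul]
    _ = (∑ y ∈ B.attach, v ↑y) + A.card * c := by
        rw [← Finset.univ_eq_attach, ← Finset.univ_eq_attach,
          Equiv.sum_comp e (fun y => v ↑y)]
    _ = (∑ b ∈ B, v b) + A.card * c := by rw [Finset.sum_attach]

open Finset in
/-- the Condorcet-winning certificate of CondorcetWinning1:
under conditions (i)-(iv) the team U ∪ X beats every k-sized subset of W ∪ Y ∪ Z. -/
theorem stmt11 (n : ℕ) (v : Fin n → ℝ)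
    (U W X Y Z : Finset (Fin n))
    (hUW : Disjoint U W) (hUX : Disjoint U X) (hUY : Disjoint U Y) (hUZ : Disjoint U Z)
    (hWX : Disjoint W X) (hWY : Disjoint W Y) (hWZ : Disjoint W Z)
    (hXY : Disjoint X Y) (hXZ : Disjoint X Z) (hYZ : Disjoint Y Z)
    (hcardUW : U.card = W.card) (hcardXY : X.card = Y.card) (hcardZU : Z.card ≤ U.card)
    (ε₁ ε₂ : ℝ) (hε₁ : 0 < ε₁) (hε₁₂ : ε₁ < ε₂)
    (u w : Fin (Z.card + 1) → Fin n)
    (hu : Function.Injective u) (hw : Function.Injective w)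
    (huU : ∀ i, u i ∈ U) (hwW : ∀ i, w i ∈ W)
    (hi : |(∑ x ∈ X, v x) - ∑ x ∈ Y, v x| < ε₁)
    (hii : ∀ a ∈ Y ∪ W, ∀ b ∈ Z, |v a - v b| < ε₂)
    (hiii_a : ε₁ ≤ v (u 0) - v (w 0))
    (hiii_b : ∀ i : Fin (Z.card + 1), i ≠ 0 → ε₂ ≤ v (u i) - v (w i))
    (hiv : ∀ x ∈ U, ∀ y ∈ W, v y < v x) :
    ∀ B ⊆ W ∪ Y ∪ Z, B.card = W.card + Y.card →
      (∑ x ∈ B, v x) < ∑ x ∈ U ∪ X, v x := by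
  intro B hB hBcard
  have hε₂ : (0:ℝ) < ε₂ := hε₁.trans hε₁₂
  -- split B
  set BWY := B ∩ (W ∪ Y) with hBWY
  set BZ := B ∩ Z with hBZ
  have hsplit : BWY ∪ BZ = B := by
    rw [hBWY, hBZ, ← Finset.inter_union_distrib_left]
    exact Finset.inter_eq_left.mpr (by simpa [Finset.union_assoc] using hB)
  have hdisjWYZ : Disjoint (W ∪ Y) Z := Finset.disjoint_union_left.mpr ⟨hWZ, hYZ⟩
  have hdisjB : Disjoint BWY BZ :=
    (hdisjWYZ.mono (Finset.inter_subset_right) (Finset.inter_subset_right))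
  have hsumB : ∑ x ∈ B, v x = (∑ x ∈ BWY, v x) + ∑ x ∈ BZ, v x := by
    rw [← hsplit, Finset.sum_union hdisjB]
  have hcardB : BWY.card + BZ.card = B.card := by
    rw [← hsplit, Finset.card_union_of_disjoint hdisjB]
  -- the missing part of W ∪ Y
  set M := (W ∪ Y) \ B with hM
  have hMsub : M ⊆ W ∪ Y := Finset.sdiff_subset
  have hWYcard : (W ∪ Y).card = W.card + Y.card := Finset.card_union_of_disjoint hWY
  have hsumWY : (∑ x ∈ M, v x) + ∑ x ∈ BWY, v x = ∑ x ∈ W ∪ Y, v x := by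
    have : (W ∪ Y) \ BWY = M := by
      rw [hBWY, Finset.inter_comm, Finset.sdiff_inter_self_left]
    rw [← this, Finset.sum_sdiff (Finset.inter_subset_right)]
  have hMcard : M.card = BZ.card := by
    have h1 : M.card + BWY.card = (W ∪ Y).card := by
      have : (W ∪ Y) \ BWY = M := by
        rw [hBWY, Finset.inter_comm, Finset.sdiff_inter_self_left]
      rw [← this]
      exact Finset.card_sdiff_add_card_eq_card (Finset.inter_subset_right)
    omega
  -- (1) sum over BZ vs sum over M
  have h1 : ∑ x ∈ BZ, v x ≤ (∑ x ∈ M, v x) + BZ.card * ε₂ := by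
    have := sum_le_sum_add_card_mul v ε₂ BZ M hMcard.symm ?_
    · exact this
    · intro b hb a ha
      have hbZ : b ∈ Z := Finset.mem_inter.mp hb |>.2
      have haWY : a ∈ Y ∪ W := by
        rcases Finset.mem_union.mp (hMsub ha) with h | h
        · exact Finset.mem_union_right _ h
        · exact Finset.mem_union_left _ h
      have := hii a haWY b hbZ
      have := abs_lt.mp this
      linarith [this.1]
  -- (2)
  have h2 : (∑ x ∈ Y, v x) - ε₁ < ∑ x ∈ X, v x := by
    have := abs_lt.mp hi
    linarith [this.1]
  -- (3) sum over U vs sum over W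
  have h3 : (∑ x ∈ W, v x) + (ε₁ + Z.card * ε₂) ≤ ∑ x ∈ U, v x := by
    set U' := Finset.univ.image u with hU'
    set W' := Finset.univ.image w with hW'
    have hU'sub : U' ⊆ U := by
      intro x hx; obtain ⟨i, _, rfl⟩ := Finset.mem_image.mp hx; exact huU i
    have hW'sub : W' ⊆ W := by
      intro x hx; obtain ⟨i, _, rfl⟩ := Finset.mem_image.mp hx; exact hwW i
    have hU'card : U'.card = Z.card + 1 := by
      rw [hU', Finset.card_image_of_injective _ hu, Finset.card_univ, Fintype.card_fin]
    have hW'card : W'.card = Z.card + 1 := by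
      rw [hW', Finset.card_image_of_injective _ hw, Finset.card_univ, Fintype.card_fin]
    have hsumU' : ∑ x ∈ U', v x = ∑ i, v (u i) :=
      Finset.sum_image (fun a _ b _ hab => hu hab)
    have hsumW' : ∑ x ∈ W', v x = ∑ i, v (w i) :=
      Finset.sum_image (fun a _ b _ hab => hw hab)
    have hpairs : ε₁ + Z.card * ε₂ ≤ (∑ i, v (u i)) - ∑ i, v (w i) := by
      have : (∑ i, v (u i)) - ∑ i, v (w i) = ∑ i, (v (u i) - v (w i)) := by
        rw [Finset.sum_sub_distrib]
      rw [this, Fin.sum_univ_succ]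
      have htail : (Z.card : ℝ) * ε₂ ≤ ∑ i : Fin Z.card, (v (u i.succ) - v (w i.succ)) := by
        calc (Z.card : ℝ) * ε₂ = ∑ _i : Fin Z.card, ε₂ := by
              rw [Finset.sum_const, Finset.card_univ, Fintype.card_fin, nsmul_eq_mul]
          _ ≤ _ := Finset.sum_le_sum (fun i _ => hiii_b i.succ (Fin.succ_ne_zero i))
      linarith [hiii_a]
    -- remaining parts
    have hrest : ∑ x ∈ W \ W', v x ≤ ∑ x ∈ U \ U', v x := by
      have hcard : (W \ W').card = (U \ U').card := by
        rw [Finset.card_sdiff_of_subset hW'sub, Finset.card_sdiff_of_subset hU'sub, hU'card, hW'card, hcardUW]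
      have := sum_le_sum_add_card_mul v 0 (W \ W') (U \ U') hcard ?_
      · simpa using this
      · intro a ha b hb
        have := hiv b (Finset.mem_sdiff.mp hb |>.1) a (Finset.mem_sdiff.mp ha |>.1)
        linarith
    have hUeq : (∑ x ∈ U \ U', v x) + ∑ x ∈ U', v x = ∑ x ∈ U, v x :=
      Finset.sum_sdiff hU'sub
    have hWeq : (∑ x ∈ W \ W', v x) + ∑ x ∈ W', v x = ∑ x ∈ W, v x :=
      Finset.sum_sdiff hW'sub
    rw [hsumU'] at hUeq
    rw [hsumW'] at hWeq
    linarith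
  -- m ≤ |Z|
  have hmZ : BZ.card ≤ Z.card := Finset.card_le_card Finset.inter_subset_right
  have hmZ' : (BZ.card : ℝ) * ε₂ ≤ (Z.card : ℝ) * ε₂ :=
    mul_le_mul_of_nonneg_right (by exact_mod_cast hmZ) hε₂.le
  have hsumWYeq : ∑ x ∈ W ∪ Y, v x = (∑ x ∈ W, v x) + ∑ x ∈ Y, v x :=
    Finset.sum_union hWY
  have hsumUX : ∑ x ∈ U ∪ X, v x = (∑ x ∈ U, v x) + ∑ x ∈ X, v x :=
    Finset.sum_union hUX
  linarith
end

section
/- Let 𝒟 be a finite set of ordered pairs (A,B) of k-subsets of [n]. The system of linear inequalities {Σ_{b∈B} x_b - Σ_{a∈A} x_a ≤ -1 for all (A,B) ∈ 𝒟, x ≥ 0} has a solution x ∈ ℝ^n if and only if there do NOT exist finite multisets 𝒜 = {A₁,...,A_m} and ℬ = {B₁,...,B_m} (m ≥ 1) with (A_j, B_j) ∈ 𝒟 for all j, such that every player i ∈ [n] appears the same number of times across the A_j's as across the B_j's. -/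
/-!
Summing the inequalities of a solution over a balanced collection gives `0 ≤ -m`, so a feasible
system admits no balanced collection. Conversely, all teams have the same size, so adding a
constant to `x` leaves every inequality unchanged and the sign constraints may be dropped. If the
remaining strict system `M x < -1` has no rational solution, Fourier–Motzkin elimination yields a
nonzero `y ≥ 0` with `yᵀ M = 0`; since `y` is rational, clearing denominators turns it into
multiplicities of pairs of `𝒟`, which form a balanced collection.
-/

open Matrix Finset

lemma mulVec_cons_apply {R ι : Type*} [Semiring R] [Fintype ι] {n : ℕ}
    (A : Matrix ι (Fin (n + 1)) R) (t : R) (x : Fin n → R) (i : ι) :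
    (A *ᵥ Fin.cons t x) i = A i 0 * t + (A.submatrix id Fin.succ *ᵥ x) i := by
  simp [mulVec, dotProduct, Fin.sum_univ_succ]

section FourierMotzkin

variable {F ι : Type*} [Field F] [LinearOrder F]

lemma exists_mul_add_lt [IsStrictOrderedRing F] [Fintype ι] (c s b : ι → F)
    (hzero : ∀ i, c i = 0 → s i < b i)
    (hpair : ∀ p q, 0 < c p → c q < 0 → c p * s q - c q * s p < c p * b q - c q * b p) :
    ∃ t, ∀ i, c i * t + s i < b i := by
  let r i := (b i - s i) / c i
  obtain ⟨t, hlow, hupp⟩ := Finset.exists_between' (({i | c i < 0} : Finset ι).image r)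
    (({i | 0 < c i} : Finset ι).image r) <| by
      simp only [Finset.forall_mem_image, Finset.mem_filter, Finset.mem_univ, true_and]
      intro q hq p hp
      have := hpair p q hp hq
      rw [div_lt_iff_of_neg hq, div_mul_eq_mul_div, div_lt_iff₀ hp]
      nlinarith
  refine ⟨t, fun i => ?_⟩
  rcases lt_trichotomy (c i) 0 with hi | hi | hi
  · have := hlow (r i) (Finset.mem_image_of_mem r (by simpa using hi))
    rw [div_lt_iff_of_neg hi] at this
    linarith
  · simpa [hi] using hzero i hi
  · have := hupp (r i) (Finset.mem_image_of_mem r (by simpa using hi))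
    rw [lt_div_iff₀ hi] at this
    linarith

abbrev EliminationIndex (c : ι → F) : Type _ :=
  {i // c i = 0} ⊕ ({i // 0 < c i} × {i // c i < 0})

/-- One Fourier–Motzkin step: every row is a nonnegative combination of rows of a system whose
first column is `c`, chosen so that `c` cancels. -/
def eliminationMatrix [DecidableEq ι] (c : ι → F) : Matrix (EliminationIndex c) ι F
  | .inl i => Pi.single i.1 1
  | .inr (p, q) => c p • Pi.single q.1 1 - c q • Pi.single p.1 1

section Elimination

variable [DecidableEq ι] (c : ι → F)

@[simp]
lemma eliminationMatrix_mulVec_inl [Fintype ι] (v : ι → F) (i : {i // c i = 0}) :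
    (eliminationMatrix c *ᵥ v) (.inl i) = v i := by
  simp [eliminationMatrix, mulVec]

@[simp]
lemma eliminationMatrix_mulVec_inr [Fintype ι] (v : ι → F) (p : {i // 0 < c i})
    (q : {i // c i < 0}) :
    (eliminationMatrix c *ᵥ v) (.inr (p, q)) = c p * v q - c q * v p := by
  simp only [eliminationMatrix, mulVec]
  rw [sub_dotProduct, smul_dotProduct, smul_dotProduct, single_one_dotProduct,
    single_one_dotProduct, smul_eq_mul, smul_eq_mul]

lemma eliminationMatrix_mulVec_self [Fintype ι] : eliminationMatrix c *ᵥ c = 0 := by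
  ext (i | ⟨p, q⟩)
  · simpa using i.2
  · simp [mul_comm]

lemma eliminationMatrix_nonneg [IsStrictOrderedRing F] (k : EliminationIndex c) (i : ι) :
    0 ≤ eliminationMatrix c k i := by
  rcases k with i' | ⟨p, q⟩
  · by_cases h : i = i'.1 <;> simp [eliminationMatrix, h]
  · simp only [eliminationMatrix, Pi.sub_apply, Pi.smul_apply, Pi.single_apply, smul_eq_mul]
    have hp := p.2
    have hq := q.2
    split_ifs <;> nlinarith

lemma eliminationMatrix_row_ne_zero [IsStrictOrderedRing F] (k : EliminationIndex c) :
    eliminationMatrix c k ≠ 0 := by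
  rcases k with i | ⟨p, q⟩
  · simp [eliminationMatrix]
  · intro h
    have hpq : p.1 ≠ q.1 := fun h' => (q.2.trans p.2).ne' (h' ▸ rfl)
    have := congrFun h p
    simp [eliminationMatrix, hpq] at this
    exact q.2.ne this

end Elimination

def IsInfeasibilityCertificate {σ : Type*} [Fintype ι] (A : Matrix ι σ F) (b y : ι → F) : Prop :=
  0 ≤ y ∧ y ≠ 0 ∧ y ᵥ* A = 0 ∧ y ⬝ᵥ b ≤ 0

namespace IsInfeasibilityCertificate

variable [Fintype ι] {κ σ : Type*} [Fintype κ]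

lemma vecMul [IsStrictOrderedRing F] {A : Matrix ι σ F} {b : ι → F} {W : Matrix κ ι F}
    {y : κ → F}
    (hW : ∀ k i, 0 ≤ W k i) (hW₀ : ∀ k, W k ≠ 0)
    (hy : IsInfeasibilityCertificate (W * A) (W *ᵥ b) y) :
    IsInfeasibilityCertificate A b (y ᵥ* W) := by
  obtain ⟨hy₀, hyne, hyA, hyb⟩ := hy
  have hyW : 0 ≤ y ᵥ* W := fun i =>
    Finset.sum_nonneg fun k _ => mul_nonneg (hy₀ k) (hW k i)
  refine ⟨hyW, ?_, by rwa [vecMul_vecMul], by rwa [← dotProduct_mulVec]⟩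
  obtain ⟨k, hk⟩ := Function.ne_iff.mp hyne
  obtain ⟨i, hi⟩ := Function.ne_iff.mp (hW₀ k)
  refine Function.ne_iff.mpr ⟨i, (lt_of_lt_of_le ?_ (Finset.single_le_sum
    (fun k _ => mul_nonneg (hy₀ k) (hW k i)) (Finset.mem_univ k))).ne'⟩
  exact mul_pos ((hy₀ k).lt_of_ne' hk) ((hW k i).lt_of_ne' hi)

lemma of_submatrix_succ {n : ℕ} {A : Matrix ι (Fin (n + 1)) F} {b y : ι → F} (hA : Aᵀ 0 = 0)
    (hy : IsInfeasibilityCertificate (A.submatrix id Fin.succ) b y) :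
    IsInfeasibilityCertificate A b y := by
  obtain ⟨hy₀, hyne, hyA, hyb⟩ := hy
  refine ⟨hy₀, hyne, funext fun j => ?_, hyb⟩
  cases j using Fin.cases with
  | zero => exact (congrArg (y ⬝ᵥ ·) hA).trans (dotProduct_zero y)
  | succ j => exact congrFun hyA j

end IsInfeasibilityCertificate

variable [IsStrictOrderedRing F] [Fintype ι] [DecidableEq ι]

lemma exists_cons_mulVec_lt {n : ℕ} (A : Matrix ι (Fin (n + 1)) F) (b : ι → F) (x : Fin n → F)
    (hx : ∀ k, ((eliminationMatrix (Aᵀ 0) * A).submatrix id Fin.succ *ᵥ x) k <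
      (eliminationMatrix (Aᵀ 0) *ᵥ b) k) :
    ∃ t, ∀ i, (A *ᵥ Fin.cons t x) i < b i := by
  rw [submatrix_mul _ _ _ _ _ Function.bijective_id, submatrix_id_id, ← mulVec_mulVec] at hx
  obtain ⟨t, ht⟩ := exists_mul_add_lt (Aᵀ 0) (A.submatrix id Fin.succ *ᵥ x) b
    (fun i hi => by simpa only [eliminationMatrix_mulVec_inl] using hx (.inl ⟨i, hi⟩))
    (fun p q hp hq => by
      simpa only [eliminationMatrix_mulVec_inr] using hx (.inr (⟨p, hp⟩, ⟨q, hq⟩)))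
  exact ⟨t, fun i => (mulVec_cons_apply A t x i).trans_lt (ht i)⟩

theorem exists_mulVec_lt_or_isInfeasibilityCertificate {n : ℕ} (A : Matrix ι (Fin n) F)
    (b : ι → F) :
    (∃ x, ∀ i, (A *ᵥ x) i < b i) ∨ ∃ y, IsInfeasibilityCertificate A b y := by
  induction n generalizing ι with
  | zero =>
    by_cases hb : ∀ i, 0 < b i
    · exact .inl ⟨0, by simpa using hb⟩
    · simp only [not_forall, not_lt] at hb
      obtain ⟨i, hi⟩ := hb
      refine .inr ⟨Pi.single i 1, ?_, by simp, Subsingleton.elim _ _, by simpa using hi⟩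
      exact Pi.single_nonneg.mpr zero_le_one
  | succ n ih =>
    set W := eliminationMatrix (Aᵀ 0)
    rcases ih ((W * A).submatrix id Fin.succ) (W *ᵥ b) with ⟨x, hx⟩ | ⟨y, hy⟩
    · obtain ⟨t, ht⟩ := exists_cons_mulVec_lt A b x hx
      exact .inl ⟨_, ht⟩
    · refine .inr ⟨y ᵥ* W, .vecMul (eliminationMatrix_nonneg _) (eliminationMatrix_row_ne_zero _)
        (.of_submatrix_succ ?_ hy)⟩
      exact funext fun k => congrFun (eliminationMatrix_mulVec_self (Aᵀ 0)) k

end FourierMotzkin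

section Comparisons

variable {α : Type*} [DecidableEq α]

def comparisonMatrix (R : Type*) [Ring R] (𝒟 : Finset (Finset α × Finset α)) : Matrix 𝒟 α R :=
  fun p i => (if i ∈ p.1.2 then 1 else 0) - (if i ∈ p.1.1 then 1 else 0)

variable {R : Type*} [Ring R] {𝒟 : Finset (Finset α × Finset α)}

lemma comparisonMatrix_mulVec [Fintype α] (x : α → R) (p : 𝒟) :
    (comparisonMatrix R 𝒟 *ᵥ x) p = ∑ b ∈ p.1.2, x b - ∑ a ∈ p.1.1, x a := by
  simp [comparisonMatrix, mulVec, dotProduct, sub_mul, Finset.sum_sub_distrib, ite_mul]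

lemma comparisonMatrix_vecMul (y : 𝒟 → R) (i : α) :
    (y ᵥ* comparisonMatrix R 𝒟) i =
      ∑ p : 𝒟, (if i ∈ p.1.2 then y p else 0) - ∑ p : 𝒟, (if i ∈ p.1.1 then y p else 0) := by
  simp [comparisonMatrix, vecMul, dotProduct, mul_sub, Finset.sum_sub_distrib, mul_ite]

end Comparisons

lemma sum_sum_eq_sum_card_filter_mul {α β R : Type*} [Fintype α] [DecidableEq α] [Fintype β]
    [Semiring R] (g : β → Finset α) (x : α → R) :
    ∑ j, ∑ a ∈ g j, x a = ∑ a, #{j | a ∈ g j} * x a := by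
  calc ∑ j, ∑ a ∈ g j, x a = ∑ j, ∑ a, if a ∈ g j then x a else 0 := by
        simp only [Finset.sum_ite_mem, Finset.univ_inter]
    _ = ∑ a, ∑ j, if a ∈ g j then x a else 0 := Finset.sum_comm
    _ = ∑ a, #{j | a ∈ g j} * x a := by
        simp only [← Finset.sum_filter, Finset.sum_const, nsmul_eq_mul]

lemma sum_sub_sum_eq_zero_of_balanced {α β R : Type*} [Fintype α] [DecidableEq α] [Fintype β]
    [Ring R] (f : β → Finset α × Finset α)
    (hf : ∀ i, #{j | i ∈ (f j).1} = #{j | i ∈ (f j).2}) (x : α → R) :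
    ∑ j, (∑ b ∈ (f j).2, x b - ∑ a ∈ (f j).1, x a) = 0 := by
  rw [Finset.sum_sub_distrib, sum_sum_eq_sum_card_filter_mul (fun j => (f j).2),
    sum_sum_eq_sum_card_filter_mul (fun j => (f j).1)]
  simp [hf]

lemma exists_nonneg_sum_sub_sum_le_of_card_eq {α R : Type*} [Fintype α] [Ring R] [LinearOrder R]
    [IsOrderedRing R] {𝒟 : Finset (Finset α × Finset α)} (hcard : ∀ p ∈ 𝒟, #p.1 = #p.2)
    (x : α → R) (hx : ∀ p ∈ 𝒟, ∑ b ∈ p.2, x b - ∑ a ∈ p.1, x a ≤ -1) :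
    ∃ x' : α → R, (∀ i, 0 ≤ x' i) ∧ ∀ p ∈ 𝒟, ∑ b ∈ p.2, x' b - ∑ a ∈ p.1, x' a ≤ -1 := by
  let C := ∑ i, |x i|
  refine ⟨fun i => x i + C, fun i => ?_, fun p hp => ?_⟩
  · have : |x i| ≤ C := Finset.single_le_sum (fun i _ => abs_nonneg (x i)) (Finset.mem_univ i)
    exact neg_le_iff_add_nonneg.mp ((neg_le_neg this).trans (neg_abs_le _))
  · simpa [Finset.sum_add_distrib, hcard p hp] using hx p hp

lemma exists_fin_family_of_weights {ι β : Type*} [Fintype ι] (g : ι → β) (c : ι → ℕ) :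
    ∃ (m : ℕ) (f : Fin m → β), m = ∑ i, c i ∧ (∀ j, ∃ i, f j = g i) ∧
      ∀ (P : β → Prop) [DecidablePred P], #{j | P (f j)} = ∑ i, if P (g i) then c i else 0 := by
  let e := (Fintype.equivFin (Σ i, Fin (c i))).symm
  refine ⟨_, fun j => g (e j).1, by simp, fun j => ⟨(e j).1, rfl⟩, fun P _ => ?_⟩
  rw [Finset.card_filter, e.sum_comp (fun s => if P (g s.1) then 1 else 0), Fintype.sum_sigma]
  refine Finset.sum_congr rfl fun i _ => ?_
  split_ifs <;> simp

lemma exists_nat_eq_mul_of_nonneg {ι : Type*} [Fintype ι] (y : ι → ℚ) (hy : 0 ≤ y) :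
    ∃ (D : ℕ) (c : ι → ℕ), 0 < D ∧ ∀ i, (c i : ℚ) = D * y i := by
  let D := ∏ i, (y i).den
  have hc : ∀ i, ∃ c : ℕ, (c : ℚ) = D * y i := by
    intro i
    obtain ⟨e, he⟩ : (y i).den ∣ D := Finset.dvd_prod_of_mem _ (Finset.mem_univ i)
    refine ⟨(y i).num.natAbs * e, ?_⟩
    rw [he, Nat.cast_mul, Nat.cast_natAbs,
      abs_of_nonneg (by exact_mod_cast Rat.num_nonneg.mpr (hy i)), ← Rat.mul_den_eq_num]
    push_cast
    ring
  choose c hc using hc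
  exact ⟨D, c, Finset.prod_pos fun i _ => (y i).pos, hc⟩

lemma exists_balanced_of_vecMul_eq_zero {α : Type*} [Fintype α] [DecidableEq α]
    {𝒟 : Finset (Finset α × Finset α)} (y : 𝒟 → ℚ) (hy₀ : 0 ≤ y) (hy : y ≠ 0)
    (hyM : y ᵥ* comparisonMatrix ℚ 𝒟 = 0) :
    ∃ (m : ℕ) (f : Fin m → Finset α × Finset α), 0 < m ∧ (∀ j, f j ∈ 𝒟) ∧
      ∀ i, #{j | i ∈ (f j).1} = #{j | i ∈ (f j).2} := by
  obtain ⟨D, c, hD, hc⟩ := exists_nat_eq_mul_of_nonneg y hy₀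
  have hcM : (fun p => (c p : ℚ)) ᵥ* comparisonMatrix ℚ 𝒟 = 0 := by
    rw [show (fun p => (c p : ℚ)) = (D : ℚ) • y from funext hc, smul_vecMul, hyM, smul_zero]
  obtain ⟨m, f, rfl, hf, hcount⟩ := exists_fin_family_of_weights (fun p : 𝒟 => p.1) c
  refine ⟨_, f, ?_, fun j => ?_, fun i => ?_⟩
  · obtain ⟨p, hp⟩ := Function.ne_iff.mp hy
    have : (0 : ℚ) < c p := by
      rw [hc]
      exact mul_pos (by exact_mod_cast hD) ((hy₀ p).lt_of_ne' hp)
    exact (Nat.cast_pos.mp this).trans_le (Finset.single_le_sum (by simp) (Finset.mem_univ p))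
  · obtain ⟨p, hp⟩ := hf j
    exact hp ▸ p.2
  · have := congrFun hcM i
    rw [comparisonMatrix_vecMul, Pi.zero_apply, sub_eq_zero] at this
    rw [hcount (i ∈ ·.1), hcount (i ∈ ·.2)]
    exact_mod_cast this.symm

open Classical in
/-- Farkas-type characterization of additive representability:
the system Σ_{b∈B} x_b − Σ_{a∈A} x_a ≤ −1 ((A,B) ∈ 𝒟), x ≥ 0 is feasible iff there
is no nonempty finite collection of pairs from 𝒟 in which every player appears
equally often on the left and on the right. -/
theorem stmt12 (n k : ℕ)
    (𝒟 : Finset (Finset (Fin n) × Finset (Fin n)))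
    (hcard : ∀ p ∈ 𝒟, p.1.card = k ∧ p.2.card = k) :
    (∃ x : Fin n → ℝ, (∀ i, 0 ≤ x i) ∧
      ∀ p ∈ 𝒟, (∑ b ∈ p.2, x b) - (∑ a ∈ p.1, x a) ≤ -1) ↔
    ¬ (∃ (m : ℕ) (f : Fin m → Finset (Fin n) × Finset (Fin n)),
        0 < m ∧ (∀ j, f j ∈ 𝒟) ∧
        ∀ i : Fin n,
          (Finset.univ.filter (fun j : Fin m => i ∈ (f j).1)).card =
          (Finset.univ.filter (fun j : Fin m => i ∈ (f j).2)).card) := by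
  constructor
  · rintro ⟨x, -, hx⟩ ⟨m, f, hm, hf, hbal⟩
    have hsum := sum_sub_sum_eq_zero_of_balanced f hbal x
    have hle : ∑ j, (∑ b ∈ (f j).2, x b - ∑ a ∈ (f j).1, x a) ≤ ∑ _j : Fin m, (-1 : ℝ) :=
      Finset.sum_le_sum fun j _ => hx _ (hf j)
    simp only [hsum, Finset.sum_const, Finset.card_univ, Fintype.card_fin, nsmul_eq_mul,
      mul_neg_one] at hle
    linarith [show (0 : ℝ) < m by exact_mod_cast hm]
  · intro hno
    rcases exists_mulVec_lt_or_isInfeasibilityCertificate (comparisonMatrix ℚ 𝒟) (fun _ => -1)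
      with ⟨x, hx⟩ | ⟨y, hy₀, hy, hyM, -⟩
    · have hsize : ∀ p ∈ 𝒟, #p.1 = #p.2 := fun p hp => (hcard p hp).1.trans (hcard p hp).2.symm
      refine exists_nonneg_sum_sub_sum_le_of_card_eq hsize (fun i => (x i : ℝ)) fun p hp => ?_
      have := (hx ⟨p, hp⟩).le
      rw [comparisonMatrix_mulVec] at this
      exact_mod_cast this
    · exact absurd (exists_balanced_of_vecMul_eq_zero y hy₀ hy hyM) hno
end

section
/- Binary-search exchange invariant: Let ≻ be a strict total order on k-subsets of [n]. Let A = {a₁,...,a_k} and B = {b₁,...,b_k} be disjoint teams with A ≻ B. Then there exists an index i ∈ [k] such that, setting S = {a₁,...,a_i, b_{i+1},...,b_k} and T = {b₁,...,b_i, a_{i+1},...,a_k}, we have S ≻ T and T\{b_i}∪{a_i} ≻ S\{a_i}∪{b_i}; i.e., (S\{a_i}, T\{b_i}) is a subsets witness for a_i ≻ b_i. -/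
open Finset

private def W (n k : ℕ) (f g : Fin k → Fin n) (i : Fin k) : Finset (Fin n) :=
  (Finset.univ.filter (fun j => j ≤ i)).image f ∪
  (Finset.univ.filter (fun j => i < j)).image g

private lemma mem_W {n k : ℕ} (f g : Fin k → Fin n) (i : Fin k) (x : Fin n) :
    x ∈ W n k f g i ↔ (∃ j, j ≤ i ∧ f j = x) ∨ (∃ j, i < j ∧ g j = x) := by
  simp [W]

private lemma card_W {n k : ℕ} (f g : Fin k → Fin n)
    (hf : Function.Injective f) (hg : Function.Injective g)
    (hfg : ∀ p q, f p ≠ g q) (i : Fin k) : (W n k f g i).card = k := by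
  rw [W, card_union_of_disjoint, card_image_of_injective _ hf,
    card_image_of_injective _ hg]
  · have := Finset.card_filter_add_card_filter_not
      (s := (univ : Finset (Fin k))) (p := fun j => j ≤ i)
    simp only [not_le, card_univ, Fintype.card_fin] at this
    exact this
  · rw [disjoint_left]
    simp only [mem_image, mem_filter, mem_univ, true_and]
    rintro x ⟨j, _, rfl⟩ ⟨j', _, hj'⟩
    exact hfg j j' hj'.symm

private lemma W_top {n k : ℕ} (f g : Fin k → Fin n) {i : Fin k} (hi : i.val = k - 1) :
    W n k f g i = Finset.univ.image f := by
  have h1 : (univ : Finset (Fin k)).filter (fun j => j ≤ i) = univ :=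
    filter_true_of_mem (fun j _ => by rw [Fin.le_def]; have := j.isLt; omega)
  have h2 : (univ : Finset (Fin k)).filter (fun j => i < j) = ∅ :=
    filter_false_of_mem (fun j _ => by rw [Fin.lt_def]; have := j.isLt; omega)
  rw [W, h1, h2, image_empty, union_empty]

private lemma key0 {n k : ℕ} (f g : Fin k → Fin n)
    (hfg : ∀ p q, f p ≠ g q) (i : Fin k) (hi : i.val = 0) :
    insert (f i) ((W n k g f i).erase (g i)) = Finset.univ.image f := by
  ext x
  simp only [W, mem_insert, mem_erase, mem_union, mem_image, mem_filter,
    mem_univ, true_and]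
  constructor
  · rintro (rfl | ⟨hne, (⟨j, hj, rfl⟩ | ⟨j, hj, rfl⟩)⟩)
    · exact ⟨i, rfl⟩
    · rw [Fin.le_def] at hj
      have : j = i := Fin.ext (by omega)
      subst this
      exact absurd rfl hne
    · exact ⟨j, rfl⟩
  · rintro ⟨j, rfl⟩
    by_cases hji : j = i
    · subst hji; exact Or.inl rfl
    · refine Or.inr ⟨hfg j i, Or.inr ⟨j, ?_, rfl⟩⟩
      rw [Fin.lt_def]
      have : j.val ≠ i.val := fun hh => hji (Fin.ext hh)
      omega

private lemma key_s14 {n k : ℕ} (f g : Fin k → Fin n) (hg : Function.Injective g)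
    (hfg : ∀ p q, f p ≠ g q) (i i' : Fin k) (h : i'.val + 1 = i.val) :
    insert (f i) ((W n k g f i).erase (g i)) = W n k g f i' := by
  ext x
  simp only [W, mem_insert, mem_erase, mem_union, mem_image, mem_filter,
    mem_univ, true_and]
  constructor
  · rintro (rfl | ⟨hne, (⟨j, hj, rfl⟩ | ⟨j, hj, rfl⟩)⟩)
    · exact Or.inr ⟨i, by rw [Fin.lt_def]; omega, rfl⟩
    · refine Or.inl ⟨j, ?_, rfl⟩
      have hji : j ≠ i := fun hh => hne (by rw [hh])
      have : j.val ≠ i.val := fun hh => hji (Fin.ext hh)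
      rw [Fin.le_def] at hj ⊢
      omega
    · exact Or.inr ⟨j, by rw [Fin.lt_def] at hj ⊢; omega, rfl⟩
  · rintro (⟨j, hj, rfl⟩ | ⟨j, hj, rfl⟩)
    · refine Or.inr ⟨?_, Or.inl ⟨j, ?_, rfl⟩⟩
      · intro hh
        have := hg hh
        subst this
        rw [Fin.le_def] at hj
        omega
      · rw [Fin.le_def] at hj ⊢
        omega
    · by_cases hji : j = i
      · subst hji; exact Or.inl rfl
      · refine Or.inr ⟨hfg j i, Or.inr ⟨j, ?_, rfl⟩⟩
        have : j.val ≠ i.val := fun hh => hji (Fin.ext hh)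
        rw [Fin.lt_def] at hj ⊢
        omega

open Finset in
/-- binary-search exchange invariant: if disjoint teams
A = {a₁,...,a_k} ≻ B = {b₁,...,b_k}, there is an index i such that with
S = {a₁,...,a_i, b_{i+1},...,b_k} and T = {b₁,...,b_i, a_{i+1},...,a_k},
S ≻ T and T\{b_i}∪{a_i} ≻ S\{a_i}∪{b_i}; i.e. (S\{a_i}, T\{b_i}) is a
subsets witness for a_i ≻ b_i. -/
theorem stmt14 (n k : ℕ) (hk : 1 ≤ k) (hkn : 2*k ≤ n)
    (succ : Finset (Fin n) → Finset (Fin n) → Prop)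
    (htrans : ∀ A B C, succ A B → succ B C → succ A C)
    (hasym : ∀ A B, succ A B → ¬ succ B A)
    (htotal : ∀ A B : Finset (Fin n), A.card = k → B.card = k → A ≠ B →
      (succ A B ∨ succ B A))
    (a b : Fin k → Fin n)
    (ha : Function.Injective a) (hb : Function.Injective b)
    (hdistinct : ∀ i j, a i ≠ b j)
    (hAB : succ (Finset.univ.image a) (Finset.univ.image b)) :
    ∃ i : Fin k,
      succ ((Finset.univ.filter (fun j => j ≤ i)).image a ∪
              (Finset.univ.filter (fun j => i < j)).image b)
           ((Finset.univ.filter (fun j => j ≤ i)).image b ∪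
              (Finset.univ.filter (fun j => i < j)).image a) ∧
      succ (insert (a i)
              ((((Finset.univ.filter (fun j => j ≤ i)).image b ∪
                 (Finset.univ.filter (fun j => i < j)).image a)).erase (b i)))
           (insert (b i)
              ((((Finset.univ.filter (fun j => j ≤ i)).image a ∪
                 (Finset.univ.filter (fun j => i < j)).image b)).erase (a i))) := by
  classical
  have hd' : ∀ p q, b p ≠ a q := fun p q h => hdistinct q p h.symm
  let P : Fin k → Prop := fun i => succ (W n k a b i) (W n k b a i)
  have hPlast : P ⟨k - 1, by omega⟩ := by
    show succ (W n k a b _) (W n k b a _)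
    rw [W_top a b rfl, W_top b a rfl]
    exact hAB
  have hne : (univ.filter P).Nonempty :=
    ⟨_, mem_filter.mpr ⟨mem_univ _, hPlast⟩⟩
  set i := (univ.filter P).min' hne with hidef
  have hPi : P i := (mem_filter.mp (min'_mem _ hne)).2
  have hmin : ∀ j, P j → i ≤ j := fun j hj =>
    min'_le _ _ (mem_filter.mpr ⟨mem_univ _, hj⟩)
  refine ⟨i, hPi, ?_⟩
  show succ (insert (a i) ((W n k b a i).erase (b i)))
       (insert (b i) ((W n k a b i).erase (a i)))
  rcases Nat.eq_zero_or_pos i.val with h0 | hpos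
  · rw [key0 a b hdistinct i h0, key0 b a hd' i h0]
    exact hAB
  · obtain ⟨i', hi'⟩ : ∃ i' : Fin k, i'.val + 1 = i.val :=
      ⟨⟨i.val - 1, by omega⟩, by show i.val - 1 + 1 = i.val; omega⟩
    have hnP : ¬ P i' := by
      intro h
      have := hmin i' h
      rw [Fin.le_def] at this
      omega
    have hneST : W n k a b i' ≠ W n k b a i' := by
      intro h
      have h1 : b i' ∈ W n k b a i' :=
        (mem_W b a i' _).mpr (Or.inl ⟨i', le_refl _, rfl⟩)
      rw [← h] at h1
      rcases (mem_W a b i' _).mp h1 with ⟨j, _, hj⟩ | ⟨j, hj2, hj⟩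
      · exact hdistinct j i' hj
      · have hji := hb hj
        subst hji
        rw [Fin.lt_def] at hj2
        omega
    have hTS : succ (W n k b a i') (W n k a b i') := by
      rcases htotal _ _ (card_W a b ha hb hdistinct i')
        (card_W b a hb ha hd' i') hneST with h | h
      · exact absurd h hnP
      · exact h
    rw [key_s14 a b hb hdistinct i i' hi', key_s14 b a ha hd' i i' hi']
    exact hTS
end

section
/- Adversary lower bound: Any deterministic algorithm that identifies a Condorcet winning team by performing duels between disjoint k-subsets of [n] (receiving the winner as feedback) must, in the worst case over consistent strict total orders on teams, perform at least n - 2k duels. -/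
/-- A hidden ground-truth order: a strict total order on k-subsets of [n]
satisfying consistency. -/
def GroundOrder (n k : ℕ) (succ : Finset (Fin n) → Finset (Fin n) → Prop) : Prop :=
  (∀ A B, succ A B → ¬ succ B A) ∧
  (∀ A B C, succ A B → succ B C → succ A C) ∧
  (∀ A B : Finset (Fin n), A.card = k → B.card = k → A ≠ B → (succ A B ∨ succ B A)) ∧
  (∀ x y : Fin n, x ≠ y →
    (∀ S : Finset (Fin n), S.card = k-1 → x ∉ S → y ∉ S → succ (insert x S) (insert y S)) ∨
    (∀ S : Finset (Fin n), S.card = k-1 → x ∉ S → y ∉ S → succ (insert y S) (insert x S)))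

open Classical in
/-- The transcript of answers obtained by a deterministic algorithm `alg` (mapping a
history of boolean duel outcomes either to the next duel or to an output team) after
`t` steps against the order `succ`. -/
noncomputable def transcript (n : ℕ)
    (succ : Finset (Fin n) → Finset (Fin n) → Prop)
    (alg : List Bool → (Finset (Fin n) × Finset (Fin n)) ⊕ Finset (Fin n)) :
    ℕ → List Bool
  | 0 => []
  | t+1 =>
      let r := transcript n succ alg t
      match alg r with
      | Sum.inl q => r ++ [decide (succ q.1 q.2)]
      | Sum.inr _ => r

/-!
The adversary answers every duel against the worst player of the symmetric difference of the two
teams, where "worst" is read off a list `M` of players it has fixed so far (earliest is worst; every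
unfixed player beats every fixed one). When neither team contains a fixed player, it fixes one more,
so after `d` duels at most `d` players are fixed, and the answers so far are those of the order
given by any extension of `M`; since `M` only grows and never repeats, it stabilizes.
If the algorithm stops with a team `W` after fewer than `n - 2k` duels, fix one member `w` of `W`
next: fewer than `n - 2k` players are now fixed, so some team `B` disjoint from `W` avoids them
all, and then `w` is the worst player of `W ∪ B`, so `B` beats `W`.
-/

open Finset
open scoped symmDiff

lemma exists_forall_isPrefix {α : Type*} {L : ℕ → List α} {N : ℕ}
    (hmono : ∀ s t, s ≤ t → L s <+: L t) (hbdd : ∀ t, (L t).length ≤ N) :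
    ∃ T, ∀ t, L t <+: L T := by
  obtain ⟨T, hT⟩ : ∃ T, ∀ t, (L t).length ≤ (L T).length := by
    have hB : BddAbove (Set.range fun t => (L t).length) :=
      ⟨N, Set.forall_mem_range.2 hbdd⟩
    obtain ⟨T, hT⟩ := Nat.sSup_mem (Set.range_nonempty _) hB
    exact ⟨T, fun t => (le_csSup hB ⟨t, rfl⟩).trans_eq hT.symm⟩
  refine ⟨T, fun t => ?_⟩
  rcases le_total t T with h | h
  · exact hmono t T h
  · have hTt := hmono T t h
    rw [hTt.eq_of_length (le_antisymm hTt.length_le (hT t))]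

lemma exists_card_eq_disjoint {α : Type*} [Fintype α] [DecidableEq α] (s : Finset α) {k : ℕ}
    (h : #s + k ≤ Fintype.card α) : ∃ B : Finset α, #B = k ∧ Disjoint s B := by
  obtain ⟨B, hB, hcard⟩ :=
    exists_subset_card_eq (s := sᶜ) (n := k) (by rw [card_compl]; omega)
  exact ⟨B, hcard, disjoint_of_subset_right hB disjoint_compl_right⟩

section

variable {α : Type*} [LinearOrder α]

/-- Larger means worse. The `α` component only breaks ties among unfixed players. -/
def badness (M : List (α)) (i : α) : ℕᵒᵈ ×ₗ α :=
  toLex (OrderDual.toDual (M.idxOf i), i)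

lemma badness_injective (M : List (α)) : Function.Injective (badness M) :=
  fun _ _ h => congrArg (fun p => (ofLex p).2) h

lemma badness_lt_badness_of_idxOf_lt {M : List (α)} {i j : α}
    (h : M.idxOf i < M.idxOf j) : badness M j < badness M i :=
  Prod.Lex.toLex_lt_toLex.2 (Or.inl (OrderDual.toDual_lt_toDual.2 h))

lemma badness_lt_badness_of_mem_of_notMem {M : List (α)} {i j : α}
    (hi : i ∈ M) (hj : j ∉ M) : badness M j < badness M i :=
  badness_lt_badness_of_idxOf_lt <| by
    rw [List.idxOf_of_notMem hj]; exact List.idxOf_lt_length_iff.2 hi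

lemma badness_le_of_find?_eq_some {M : List (α)} {D : Finset (α)} {z : α}
    (h : M.find? (· ∈ D) = some z) : z ∈ D ∧ ∀ w ∈ D, badness M w ≤ badness M z := by
  obtain ⟨hz, l₁, l₂, rfl, hl₁⟩ := List.find?_eq_some_iff_append.1 h
  simp only [decide_eq_true_eq, Bool.not_eq_eq_eq_not, Bool.not_true,
    decide_eq_false_iff_not] at hz hl₁
  refine ⟨hz, fun w hw => ?_⟩
  rcases eq_or_ne w z with rfl | hwz
  · exact le_rfl
  refine (badness_lt_badness_of_idxOf_lt ?_).le
  rw [List.idxOf_append_of_notMem fun h => hl₁ z h hz,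
    List.idxOf_append_of_notMem fun h => hl₁ w h hw, List.idxOf_cons_self,
    List.idxOf_cons_ne _ hwz.symm]
  omega

/-- Team `A` beats team `B`: the worst player of `A ∆ B` lies in `B`. -/
def revLex (M : List (α)) (A B : Finset (α)) : Prop :=
  toColex (A.image (badness M)) < toColex (B.image (badness M))

instance (M : List (α)) : DecidableRel (revLex M) :=
  fun _ _ => inferInstanceAs (Decidable (_ < _))

lemma revLex_iff_of_forall_le {M : List (α)} {A B : Finset (α)} {z : α}
    (hz : z ∈ A ∆ B) (hworst : ∀ w ∈ A ∆ B, badness M w ≤ badness M z) :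
    revLex M A B ↔ z ∈ B := by
  have hinj := badness_injective M
  unfold revLex
  rw [Colex.toColex_lt_toColex_iff_exists_forall_lt]
  constructor
  · rintro ⟨_, hy, hyA, hlt⟩
    obtain ⟨y, hyB, rfl⟩ := mem_image.1 hy
    by_contra hzB
    have hzA : z ∈ A := by simpa [mem_symmDiff, hzB] using hz
    refine (hworst y (mem_symmDiff.2 (Or.inr ⟨hyB, ?_⟩))).not_gt
      (hlt _ (mem_image_of_mem _ hzA) (by rwa [hinj.mem_finset_image]))
    rwa [hinj.mem_finset_image] at hyA
  · intro hzB
    have hzA : z ∉ A := by simpa [mem_symmDiff, hzB] using hz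
    refine ⟨_, mem_image_of_mem _ hzB, by rwa [hinj.mem_finset_image], ?_⟩
    rintro _ hx hxB
    obtain ⟨x, hxA, rfl⟩ := mem_image.1 hx
    rw [hinj.mem_finset_image] at hxB
    exact (hworst x (mem_symmDiff.2 (Or.inl ⟨hxA, hxB⟩))).lt_of_ne
      (hinj.ne (ne_of_mem_of_not_mem hxA hzA))

lemma revLex_iff_of_isPrefix {M M' : List (α)} {A B : Finset (α)} (hM : M <+: M')
    (hmeet : ∃ x ∈ M, x ∈ A ∆ B) : revLex M' A B ↔ revLex M A B := by
  obtain ⟨x, hxM, hxD⟩ := hmeet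
  have hsome : (M.find? (· ∈ A ∆ B)).isSome :=
    List.find?_isSome.2 ⟨x, hxM, decide_eq_true hxD⟩
  obtain ⟨z, hz⟩ := Option.isSome_iff_exists.1 hsome
  obtain ⟨r, rfl⟩ := hM
  have hz' : (M ++ r).find? (· ∈ A ∆ B) = some z := by rw [List.find?_append, hz]; rfl
  obtain ⟨hzD, hworst⟩ := badness_le_of_find?_eq_some hz
  rw [revLex_iff_of_forall_le hzD (badness_le_of_find?_eq_some hz').2,
    revLex_iff_of_forall_le hzD hworst]

def fixWorst (M : List (α)) (D : Finset (α)) : List (α) :=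
  if h : D.Nonempty ∧ ∀ x ∈ D, x ∉ M then M ++ [D.min' h.1] else M

lemma isPrefix_fixWorst (M : List (α)) (D : Finset (α)) : M <+: fixWorst M D := by
  unfold fixWorst
  split_ifs
  exacts [List.prefix_append _ _, List.prefix_refl _]

lemma length_fixWorst_le (M : List (α)) (D : Finset (α)) :
    (fixWorst M D).length ≤ M.length + 1 := by
  unfold fixWorst
  split_ifs <;> simp

lemma nodup_fixWorst {M : List (α)} (hM : M.Nodup) (D : Finset (α)) :
    (fixWorst M D).Nodup := by
  unfold fixWorst
  split_ifs with h
  · exact hM.append (List.nodup_singleton _) (by simpa using h.2 _ (min'_mem _ h.1))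
  · exact hM

lemma exists_mem_fixWorst (M : List (α)) {D : Finset (α)} (hD : D.Nonempty) :
    ∃ x ∈ fixWorst M D, x ∈ D := by
  unfold fixWorst
  split_ifs with h
  · exact ⟨_, by simp, min'_mem _ hD⟩
  · push Not at h
    obtain ⟨x, hxD, hxM⟩ := h hD
    exact ⟨x, hxM, hxD⟩

lemma revLex_iff_of_fixWorst_isPrefix {M M' : List (α)} {A B : Finset (α)}
    (h : fixWorst M (A ∆ B) <+: M') : revLex M' A B ↔ revLex (fixWorst M (A ∆ B)) A B := by
  rcases (A ∆ B).eq_empty_or_nonempty with hAB | hAB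
  · rw [symmDiff_eq_empty.1 hAB]
    exact iff_of_false (lt_irrefl _) (lt_irrefl _)
  · exact revLex_iff_of_isPrefix h (exists_mem_fixWorst M hAB)

lemma revLex_of_mem_of_disjoint {L : List (α)} {W B : Finset (α)} {w : α}
    (hwW : w ∈ W) (hwL : w ∈ L) (hWB : Disjoint W B) (hBL : ∀ b ∈ B, b ∉ L) :
    revLex L B W := by
  have hunion : B ∆ W = B ∪ W := hWB.symm.symmDiff_eq_sup
  obtain ⟨z, hz, hworst⟩ :=
    (B ∆ W).exists_max_image (badness L) ⟨w, by simp [hunion, hwW]⟩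
  refine (revLex_iff_of_forall_le hz hworst).2 (by_contra fun hzW => ?_)
  have hzB : z ∈ B := by simpa [hunion, hzW] using hz
  exact (hworst w (by simp [hunion, hwW])).not_gt
    (badness_lt_badness_of_mem_of_notMem hwL (hBL z hzB))

end

section

variable {n : ℕ}

lemma groundOrder_revLex (k : ℕ) (M : List (Fin n)) : GroundOrder n k (revLex M) := by
  have hinj := badness_injective M
  have hinsert : ∀ a b S, a ∉ S → b ∉ S → badness M a < badness M b →
      revLex M (insert a S) (insert b S) := by
    intro a b S ha hb hab
    unfold revLex
    rwa [image_insert, image_insert, Colex.insert_lt_insert] <;>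
      rwa [hinj.mem_finset_image]
  refine ⟨fun _ _ => lt_asymm, fun _ _ _ => lt_trans, fun A B _ _ hAB => ?_, fun x y hxy => ?_⟩
  · exact lt_or_gt_of_ne fun h => hAB (image_injective hinj (toColex_inj.1 h))
  · rcases (hinj.ne hxy).lt_or_gt with h | h
    · exact Or.inl fun S _ hx hy => hinsert x y S hx hy h
    · exact Or.inr fun S _ hx hy => hinsert y x S hy hx h

/-- The answers given by the adversary and the players it has fixed after `t` steps. -/
def adversaryRun (alg : List Bool → (Finset (Fin n) × Finset (Fin n)) ⊕ Finset (Fin n)) :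
    ℕ → List Bool × List (Fin n)
  | 0 => ([], [])
  | t + 1 =>
    let r := adversaryRun alg t
    match alg r.1 with
    | .inl q =>
      let M := fixWorst r.2 (q.1 ∆ q.2)
      (r.1 ++ [decide (revLex M q.1 q.2)], M)
    | .inr _ => r

section adversaryRun

variable (alg : List Bool → (Finset (Fin n) × Finset (Fin n)) ⊕ Finset (Fin n)) {t : ℕ}

lemma adversaryRun_succ_of_inl {q : Finset (Fin n) × Finset (Fin n)}
    (h : alg (adversaryRun alg t).1 = .inl q) :
    adversaryRun alg (t + 1) =
      ((adversaryRun alg t).1 ++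
          [decide (revLex (fixWorst (adversaryRun alg t).2 (q.1 ∆ q.2)) q.1 q.2)],
        fixWorst (adversaryRun alg t).2 (q.1 ∆ q.2)) := by
  rw [adversaryRun, h]

lemma adversaryRun_succ_of_inr {W : Finset (Fin n)} (h : alg (adversaryRun alg t).1 = .inr W) :
    adversaryRun alg (t + 1) = adversaryRun alg t := by
  rw [adversaryRun, h]

lemma adversaryRun_isPrefix_succ (t : ℕ) :
    (adversaryRun alg t).2 <+: (adversaryRun alg (t + 1)).2 := by
  rcases h : alg (adversaryRun alg t).1 with q | W
  · rw [adversaryRun_succ_of_inl alg h]; exact isPrefix_fixWorst _ _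
  · rw [adversaryRun_succ_of_inr alg h]

lemma adversaryRun_isPrefix {s t : ℕ} (h : s ≤ t) :
    (adversaryRun alg s).2 <+: (adversaryRun alg t).2 := by
  induction t, h using Nat.le_induction with
  | base => exact List.prefix_refl _
  | succ t _ ih => exact ih.trans (adversaryRun_isPrefix_succ alg t)

lemma nodup_adversaryRun (t : ℕ) : (adversaryRun alg t).2.Nodup := by
  induction t with
  | zero => exact List.nodup_nil
  | succ t ih =>
    rcases h : alg (adversaryRun alg t).1 with q | W
    · rw [adversaryRun_succ_of_inl alg h]; exact nodup_fixWorst ih _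
    · rwa [adversaryRun_succ_of_inr alg h]

lemma length_adversaryRun_le (t : ℕ) :
    (adversaryRun alg t).2.length ≤ (adversaryRun alg t).1.length := by
  induction t with
  | zero => simp [adversaryRun]
  | succ t ih =>
    rcases h : alg (adversaryRun alg t).1 with q | W
    · simp only [adversaryRun_succ_of_inl alg h, List.length_append, List.length_singleton]
      have := length_fixWorst_le (adversaryRun alg t).2 (q.1 ∆ q.2)
      omega
    · rwa [adversaryRun_succ_of_inr alg h]

lemma transcript_revLex_eq {M : List (Fin n)} (hM : (adversaryRun alg t).2 <+: M) :
    transcript n (revLex M) alg t = (adversaryRun alg t).1 := by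
  induction t with
  | zero => rfl
  | succ t ih =>
    have ih := ih ((adversaryRun_isPrefix_succ alg t).trans hM)
    rcases h : alg (adversaryRun alg t).1 with q | W
    · rw [adversaryRun_succ_of_inl alg h] at hM ⊢
      simp [transcript, ih, h, revLex_iff_of_fixWorst_isPrefix hM]
    · simp [transcript, ih, h, adversaryRun_succ_of_inr alg h]

end adversaryRun

end

theorem stmt15_general (n k : ℕ) (hk : 1 ≤ k)
    (alg : List Bool → (Finset (Fin n) × Finset (Fin n)) ⊕ Finset (Fin n))
    (hcorrect : ∀ succ : Finset (Fin n) → Finset (Fin n) → Prop,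
      GroundOrder n k succ →
      ∀ (m : ℕ) (W : Finset (Fin n)), alg (transcript n succ alg m) = Sum.inr W →
        W.card = k ∧ ∀ B : Finset (Fin n), B.card = k → Disjoint W B → succ W B) :
    ∃ succ : Finset (Fin n) → Finset (Fin n) → Prop, GroundOrder n k succ ∧
      ∀ (m : ℕ) (W : Finset (Fin n)), alg (transcript n succ alg m) = Sum.inr W →
        n - 2*k ≤ (transcript n succ alg m).length := by
  obtain ⟨T, hT⟩ := exists_forall_isPrefix (fun _ _ h => adversaryRun_isPrefix alg h)
    fun t => by simpa using (nodup_adversaryRun alg t).length_le_card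
  refine ⟨revLex (adversaryRun alg T).2, groundOrder_revLex k _, fun m W hout => ?_⟩
  have hWk := (hcorrect _ (groundOrder_revLex k _) m W hout).1
  rw [transcript_revLex_eq alg (hT m)] at hout ⊢
  by_contra! hshort
  obtain ⟨w, hw⟩ : W.Nonempty := card_pos.1 (by omega)
  set L := (adversaryRun alg m).2 ++ [w]
  have hwins := (hcorrect (revLex L) (groundOrder_revLex k L) m W
    (by rwa [transcript_revLex_eq alg (List.prefix_append _ _)])).2
  obtain ⟨B, hBk, hB⟩ := exists_card_eq_disjoint (W ∪ L.toFinset) (k := k) <| by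
    have hL : L.length = (adversaryRun alg m).2.length + 1 := by simp [L]
    have := card_union_le W L.toFinset
    have := L.toFinset_card_le
    have := length_adversaryRun_le alg m
    rw [Fintype.card_fin]
    omega
  rw [disjoint_union_left] at hB
  exact lt_asymm (hwins B hBk hB.1) <| revLex_of_mem_of_disjoint hw (by simp [L]) hB.1
    fun b hb hbL => disjoint_left.1 hB.2 (List.mem_toFinset.2 hbL) hb

/-- adversary lower bound: any deterministic algorithm that, on every
consistent strict total order, outputs only Condorcet winning teams must on some
order perform at least n − 2k duels before outputting. -/
theorem stmt15 (n k : ℕ) (hk : 1 ≤ k) (hkn : 2*k ≤ n)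
    (alg : List Bool → (Finset (Fin n) × Finset (Fin n)) ⊕ Finset (Fin n))
    (hcorrect : ∀ succ : Finset (Fin n) → Finset (Fin n) → Prop,
      GroundOrder n k succ →
      ∀ (m : ℕ) (W : Finset (Fin n)), alg (transcript n succ alg m) = Sum.inr W →
        W.card = k ∧ ∀ B : Finset (Fin n), B.card = k → Disjoint W B → succ W B) :
    ∃ succ : Finset (Fin n) → Finset (Fin n) → Prop, GroundOrder n k succ ∧
      ∀ (m : ℕ) (W : Finset (Fin n)), alg (transcript n succ alg m) = Sum.inr W →
        n - 2*k ≤ (transcript n succ alg m).length :=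
  stmt15_general n k hk alg hcorrect
end

section
/- In the stochastic team-dueling setting, define for players a ≠ b and each triple (S,S',T) with (S,S') disjoint (k-1)-subsets of [n]\{a,b} and T a k-subset of [n]\{a,b} disjoint from S, the quantity E[X_{a,b}(S,S',T)] = (P(S∪{a},S'∪{b}) − P(S∪{b},S'∪{a}) + P(S∪{a},T) − P(S∪{b},T))/4. If a ≻ b (in the consistent ground-truth order), then E[X_{a,b}(S,S',T)] ≥ 0 for every such triple. -/
/-- if a ≻ b in the consistent ground-truth order, then
E[X_{a,b}(S,S',T)] ≥ 0 for every admissible triple (S,S',T). -/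
theorem stmt16 (n k : ℕ) (hk : 1 ≤ k) (hkn : 2*k ≤ n)
    (succ : Finset (Fin n) → Finset (Fin n) → Prop)
    (P : Finset (Fin n) → Finset (Fin n) → ℝ)
    (hrange : ∀ A B, 0 ≤ P A B ∧ P A B ≤ 1)
    (hsym : ∀ A B : Finset (Fin n), A.card = k → B.card = k → A ≠ B → P A B = 1 - P B A)
    (hlink : ∀ A B : Finset (Fin n), A.card = k → B.card = k → A ≠ B →
      (succ A B ↔ 1/2 < P A B))
    (htrans : ∀ A B C, succ A B → succ B C → succ A C)
    (hasym : ∀ A B, succ A B → ¬ succ B A)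
    (htotal : ∀ A B : Finset (Fin n), A.card = k → B.card = k → A ≠ B →
      (succ A B ∨ succ B A))
    (hSST : ∀ A B C, succ A B → succ B C → max (P A B) (P B C) ≤ P A C)
    (hcons : ∀ x y : Fin n, x ≠ y →
      (∀ S : Finset (Fin n), S.card = k-1 → x ∉ S → y ∉ S → succ (insert x S) (insert y S)) ∨
      (∀ S : Finset (Fin n), S.card = k-1 → x ∉ S → y ∉ S → succ (insert y S) (insert x S)))
    (a b : Fin n) (hab : a ≠ b)
    (hdom : ∀ S : Finset (Fin n), S.card = k-1 → a ∉ S → b ∉ S →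
      succ (insert a S) (insert b S))
    (S S' T : Finset (Fin n))
    (hS : S.card = k-1) (hS' : S'.card = k-1) (hT : T.card = k)
    (haS : a ∉ S) (hbS : b ∉ S) (haS' : a ∉ S') (hbS' : b ∉ S')
    (haT : a ∉ T) (hbT : b ∉ T)
    (hSS' : Disjoint S S') (hST : Disjoint S T) :
    0 ≤ (P (insert a S) (insert b S') - P (insert b S) (insert a S')
          + P (insert a S) T - P (insert b S) T) / 4 := by
  -- cardinalities
  have cardins : ∀ (x : Fin n) (X : Finset (Fin n)), x ∉ X → X.card = k - 1 →
      (insert x X).card = k := by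
    intro x X hx hX
    rw [Finset.card_insert_of_notMem hx, hX]; omega
  have cA : (insert a S).card = k := cardins a S haS hS
  have cB : (insert b S).card = k := cardins b S hbS hS
  have cC1 : (insert b S').card = k := cardins b S' hbS' hS'
  have cC2 : (insert a S').card = k := cardins a S' haS' hS'
  -- ne of distinct sets
  have neAB : insert a S ≠ insert b S := by
    intro h
    exact haS (by have := h ▸ Finset.mem_insert_self a S; simpa [hab] using this)
  have neC2C1 : insert a S' ≠ insert b S' := by
    intro h
    exact haS' (by have := h ▸ Finset.mem_insert_self a S'; simpa [hab] using this)
  -- monotone in first argument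
  have mono1 : ∀ A B C : Finset (Fin n), A.card = k → B.card = k → C.card = k →
      succ A B → C ≠ A → C ≠ B → P B C ≤ P A C := by
    intro A B C cA cB cC hAB hCA hCB
    have neAB : A ≠ B := fun h => hasym A B hAB (h ▸ hAB)
    rcases htotal B C cB cC hCB.symm with hBC | hCB'
    · have := hSST A B C hAB hBC
      exact le_trans (le_max_right _ _) this
    · rcases htotal A C cA cC hCA.symm with hAC | hCA'
      · have h1 : 1/2 < P A C := (hlink A C cA cC hCA.symm).mp hAC
        have h2 : 1/2 < P C B := (hlink C B cC cB hCB).mp hCB'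
        have h3 : P B C = 1 - P C B := hsym B C cB cC hCB.symm
        linarith
      · have := hSST C A B hCA' hAB
        have h4 : P C A ≤ P C B := le_trans (le_max_left _ _) this
        have h5 : P A C = 1 - P C A := hsym A C cA cC hCA.symm
        have h6 : P B C = 1 - P C B := hsym B C cB cC hCB.symm
        linarith
  -- monotone (antitone) in second argument
  have mono2 : ∀ X C D : Finset (Fin n), X.card = k → C.card = k → D.card = k →
      succ C D → X ≠ C → X ≠ D → P X C ≤ P X D := by
    intro X C D cX cC cD hCD hXC hXD
    have h1 : P X C = 1 - P C X := hsym X C cX cC hXC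
    have h2 : P X D = 1 - P D X := hsym X D cX cD hXD
    have := mono1 C D X cC cD cX hCD hXC hXD
    linarith
  have hAB : succ (insert a S) (insert b S) := hdom S hS haS hbS
  have hC2C1 : succ (insert a S') (insert b S') := hdom S' hS' haS' hbS'
  -- term 2 : P (insert b S) T ≤ P (insert a S) T
  have hTA : T ≠ insert a S := fun h => haT (h ▸ Finset.mem_insert_self a S)
  have hTB : T ≠ insert b S := fun h => hbT (h ▸ Finset.mem_insert_self b S)
  have term2 : P (insert b S) T ≤ P (insert a S) T :=
    mono1 _ _ _ cA cB hT hAB hTA hTB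
  -- term 1
  have term1 : P (insert b S) (insert a S') ≤ P (insert a S) (insert b S') := by
    by_cases hSeq : S = S'
    · subst hSeq
      have h1 : 1/2 < P (insert a S) (insert b S) := (hlink _ _ cA cB neAB).mp hAB
      have h2 : P (insert b S) (insert a S) = 1 - P (insert a S) (insert b S) :=
        hsym _ _ cB cA (Ne.symm neAB)
      linarith
    · -- A ≠ C1, B ≠ C2 always; B ≠ C1, since S ≠ S'
      have neAC1 : insert b S' ≠ insert a S := by
        intro h
        have := h ▸ Finset.mem_insert_self a S
        rcases Finset.mem_insert.mp this with h' | h'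
        · exact hab h'
        · exact haS' h'
      have neBC2 : insert b S ≠ insert a S' := by
        intro h
        have := h ▸ Finset.mem_insert_self b S
        rcases Finset.mem_insert.mp this with h' | h'
        · exact hab h'.symm
        · exact hbS' h'
      have neBC1 : insert b S ≠ insert b S' := by
        intro h
        apply hSeq
        have := congrArg (fun X => Finset.erase X b) h
        simpa [Finset.erase_insert hbS, Finset.erase_insert hbS'] using this
      calc P (insert b S) (insert a S')
          ≤ P (insert b S) (insert b S') :=
            mono2 _ _ _ cB cC2 cC1 hC2C1 neBC2 neBC1
        _ ≤ P (insert a S) (insert b S') :=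
            mono1 _ _ _ cA cB cC1 hAB neAC1 neBC1.symm
  linarith
end

section
/- Under the stochastic team-dueling assumptions, if a ≻ b then for every (k-1)-subset S of [n]\{a,b} and every disjoint k-subset T of [n]\{a,b}: P(S∪{a},T) + P(T,S∪{b}) ≥ 1. -/
/-- if a ≻ b then for every (k-1)-subset S and disjoint k-subset T
(both avoiding a,b): P(S∪{a},T) + P(T,S∪{b}) ≥ 1. -/
theorem stmt18 (n k : ℕ) (hk : 1 ≤ k) (hkn : 2*k ≤ n)
    (succ : Finset (Fin n) → Finset (Fin n) → Prop)
    (P : Finset (Fin n) → Finset (Fin n) → ℝ)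
    (hrange : ∀ A B, 0 ≤ P A B ∧ P A B ≤ 1)
    (hsym : ∀ A B : Finset (Fin n), A.card = k → B.card = k → A ≠ B → P A B = 1 - P B A)
    (hlink : ∀ A B : Finset (Fin n), A.card = k → B.card = k → A ≠ B →
      (succ A B ↔ 1/2 < P A B))
    (htrans : ∀ A B C, succ A B → succ B C → succ A C)
    (hasym : ∀ A B, succ A B → ¬ succ B A)
    (htotal : ∀ A B : Finset (Fin n), A.card = k → B.card = k → A ≠ B →
      (succ A B ∨ succ B A))
    (hSST : ∀ A B C, succ A B → succ B C → max (P A B) (P B C) ≤ P A C)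
    (hcons : ∀ x y : Fin n, x ≠ y →
      (∀ S : Finset (Fin n), S.card = k-1 → x ∉ S → y ∉ S → succ (insert x S) (insert y S)) ∨
      (∀ S : Finset (Fin n), S.card = k-1 → x ∉ S → y ∉ S → succ (insert y S) (insert x S)))
    (a b : Fin n) (hab : a ≠ b)
    (hdom : ∀ S : Finset (Fin n), S.card = k-1 → a ∉ S → b ∉ S →
      succ (insert a S) (insert b S))
    (S T : Finset (Fin n))
    (hS : S.card = k-1) (hT : T.card = k)
    (haS : a ∉ S) (hbS : b ∉ S) (haT : a ∉ T) (hbT : b ∉ T)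
    (hdisj : Disjoint S T) :
    1 ≤ P (insert a S) T + P T (insert b S) := by
  set A := insert a S with hA
  set B := insert b S with hB
  have hAc : A.card = k := by
    rw [hA, Finset.card_insert_of_notMem haS, hS]; omega
  have hBc : B.card = k := by
    rw [hB, Finset.card_insert_of_notMem hbS, hS]; omega
  have hAT : A ≠ T := fun h => haT (h ▸ Finset.mem_insert_self a S)
  have hBT : B ≠ T := fun h => hbT (h ▸ Finset.mem_insert_self b S)
  have hAB : A ≠ B := by
    intro h
    have : a ∈ B := h ▸ Finset.mem_insert_self a S
    rcases Finset.mem_insert.mp this with h' | h'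
    · exact hab h'
    · exact haS h'
  have hsAB : succ A B := hdom S hS haS hbS
  rcases htotal A T hAc hT hAT with hATs | hTAs
  · rcases htotal T B hT hBc (Ne.symm hBT) with hTBs | hBTs
    · have h1 := (hlink A T hAc hT hAT).mp hATs
      have h2 := (hlink T B hT hBc (Ne.symm hBT)).mp hTBs
      linarith
    · have h := hSST A B T hsAB hBTs
      have hle : P B T ≤ P A T := le_trans (le_max_right _ _) h
      have hsymTB : P T B = 1 - P B T := hsym T B hT hBc (Ne.symm hBT)
      linarith
  · have h := hSST T A B hTAs hsAB
    have hle : P T A ≤ P T B := le_trans (le_max_left _ _) h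
    have hsymAT : P A T = 1 - P T A := hsym A T hAc hT hAT
    linarith
end
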